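/- arXiv:1606.02056 — 11 statements merged into one kernel-verified Lean document; each statement's English description precedes it below -/
import Mathlib

section
/- Let U be an ultrafilter on ℕ and, for each i = 1,…,k, let f_i : ℕ^{n_i} → ℤ be a function such that U is a PR-witness of f_i with injectivity |{x_{i,j₁},…,x_{i,j_{p_i}}}| ≥ s_i. Then for every A ∈ U there exist an element a ∈ A and, for each i = 1,…,k, elements a_{i,2},…,a_{i,n_i} ∈ A such that f_i(a, a_{i,2},…,a_{i,n_i}) = 0 and the tuple (a, a_{i,2},…,a_{i,n_i}) takes at least s_i distinct values at the coordinates j₁,…,j_{p_i}. In other words, U witnesses the simultaneous solvability of the k equations with a common value of the first variable. -/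
/- `ℕ+` plays the role of the paper's `ℕ` (the positive integers).
The `i`-th function has arity `n i + 1 ≥ 1`; its first variable is coordinate `0`. -/

/-- An ultrafilter `U` on `ℕ+` is a PR-witness of `f` with injectivity
`|{x_{i₁},…,x_{i_p}}| ≥ s`. -/
def IsPRWitness {n p : ℕ} (f : (Fin n → ℕ+) → ℤ) (ι : Fin p → Fin n) (s : ℕ)
    (U : Ultrafilter ℕ+) : Prop :=
  ∀ A : Set ℕ+, A ∈ U → ∃ a : Fin n → ℕ+,
    (∀ i, a i ∈ A) ∧ f a = 0 ∧
    s ≤ (Finset.image (fun j => a (ι j)) Finset.univ).card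

/-- If `U` is simultaneously a PR-witness of the functions `f i` (each with its
injectivity condition), then every `A ∈ U` contains solutions to each equation
`f i = 0` sharing a common value `a` of the first variable, with the required
injectivity. -/
theorem witness_of_system {k : ℕ} (n p : Fin k → ℕ)
    (f : ∀ i, (Fin (n i + 1) → ℕ+) → ℤ)
    (ι : ∀ i, Fin (p i) → Fin (n i + 1)) (s : Fin k → ℕ)
    (U : Ultrafilter ℕ+)
    (h : ∀ i, IsPRWitness (f i) (ι i) (s i) U) :
    ∀ A : Set ℕ+, A ∈ U → ∃ a : ℕ+, a ∈ A ∧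
      ∀ i, ∃ b : Fin (n i + 1) → ℕ+,
        b 0 = a ∧ (∀ j, b j ∈ A) ∧ f i b = 0 ∧
        s i ≤ (Finset.image (fun j => b (ι i j)) Finset.univ).card := by
  intro A hA
  set C : Fin k → Set ℕ+ := fun i => {a : ℕ+ | ∃ b : Fin (n i + 1) → ℕ+,
    b 0 = a ∧ (∀ j, b j ∈ A) ∧ f i b = 0 ∧
    s i ≤ (Finset.image (fun j => b (ι i j)) Finset.univ).card} with hC
  have hCU : ∀ i, C i ∈ U := by
    intro i
    by_contra hc
    have h2 : (C i)ᶜ ∈ U := Ultrafilter.compl_mem_iff_notMem.mpr hc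
    have h3 : A ∩ (C i)ᶜ ∈ U := Filter.inter_mem hA h2
    obtain ⟨b, hb, hf, hs⟩ := h i _ h3
    exact (hb 0).2 ⟨b, rfl, fun j => (hb j).1, hf, hs⟩
  have hI : A ∩ ⋂ i, C i ∈ U :=
    Filter.inter_mem hA ((Filter.iInter_mem).mpr hCU)
  obtain ⟨a, haA, haC⟩ := Filter.nonempty_of_mem hI
  exact ⟨a, haA, fun i => Set.mem_iInter.mp haC i⟩
end

section
/- Let f : ℕⁿ → ℤ be homogeneous, i.e. there is ℓ ∈ ℕ such that f(λx₁,…,λxₙ) = λ^ℓ · f(x₁,…,xₙ) for all λ, x₁,…,xₙ ∈ ℕ, and assume f is partition regular on ℕ with injectivity |{x_{i₁},…,x_{i_p}}| ≥ s. Then the set W_f of all ultrafilters on ℕ that are PR-witnesses of f with injectivity |{x_{i₁},…,x_{i_p}}| ≥ s is a topologically closed subset of βℕ and is a two-sided ideal of (βℕ, ⊙): for every U ∈ W_f and every V ∈ βℕ, both U ⊙ V ∈ W_f and V ⊙ U ∈ W_f. -/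
/- `ℕ+` plays the role of the paper's `ℕ` (the positive integers).
`Ultrafilter ℕ+` carries the Stone topology (from Mathlib). -/

/-- Partition regularity with injectivity `|{x_{i₁},…,x_{i_p}}| ≥ s`. -/
def IsPRwithInj {n p : ℕ} (f : (Fin n → ℕ+) → ℤ) (ι : Fin p → Fin n) (s : ℕ) : Prop :=
  ∀ (r : ℕ) (C : ℕ+ → Fin r), ∃ a : Fin n → ℕ+,
    (∀ i j, C (a i) = C (a j)) ∧ f a = 0 ∧
    s ≤ (Finset.image (fun j => a (ι j)) Finset.univ).card

/-- The pseudo-product `U ⊙ V` on `βℕ`:  `A ∈ U ⊙ V ↔ {n | {m | m * n ∈ A} ∈ V} ∈ U`. -/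
def pseudoMul (U V : Ultrafilter ℕ+) : Ultrafilter ℕ+ :=
  U.bind fun n => V.map fun m => m * n

/-- If `f` is homogeneous and partition regular with injectivity
`|{x_{i₁},…,x_{i_p}}| ≥ s`, then the set `W_f` of its PR-witnesses with that
injectivity is a closed subset of `βℕ` and a two-sided ideal of `(βℕ, ⊙)`. -/
theorem witnessSet_closed_two_sided_ideal {n p : ℕ}
    (f : (Fin n → ℕ+) → ℤ) (ι : Fin p → Fin n) (s : ℕ) (ℓ : ℕ)
    (hhom : ∀ (lam : ℕ+) (x : Fin n → ℕ+),
      f (fun i => lam * x i) = ((lam : ℕ) : ℤ) ^ ℓ * f x)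
    (hPR : IsPRwithInj f ι s) :
    IsClosed {U : Ultrafilter ℕ+ | IsPRWitness f ι s U} ∧
    ∀ U ∈ {U : Ultrafilter ℕ+ | IsPRWitness f ι s U}, ∀ V : Ultrafilter ℕ+,
      pseudoMul U V ∈ {U : Ultrafilter ℕ+ | IsPRWitness f ι s U} ∧
      pseudoMul V U ∈ {U : Ultrafilter ℕ+ | IsPRWitness f ι s U} := by
  constructor
  · rw [← isOpen_compl_iff, isOpen_iff_forall_mem_open]
    intro U hU
    simp only [Set.mem_compl_iff, Set.mem_setOf_eq, IsPRWitness] at hU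
    push_neg at hU
    obtain ⟨A, hA, hno⟩ := hU
    refine ⟨{V : Ultrafilter ℕ+ | A ∈ V}, ?_, ultrafilter_isOpen_basic A, hA⟩
    intro V hV hVw
    obtain ⟨a, ha, hfa, hcard⟩ := hVw A hV
    exact absurd hcard (Nat.not_le.mpr (hno a ha hfa))
  · intro U hU V
    constructor
    · intro A hA
      have hB : {k : ℕ+ | {m : ℕ+ | m * k ∈ A} ∈ V} ∈ U := hA
      obtain ⟨a, ha, hfa, hcard⟩ := hU _ hB
      have hmem : (⋂ i, {m : ℕ+ | m * a i ∈ A}) ∈ V :=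
        Filter.iInter_mem.2 fun i => ha i
      obtain ⟨m, hm⟩ := V.nonempty_of_mem hmem
      simp only [Set.mem_iInter, Set.mem_setOf_eq] at hm
      refine ⟨fun i => m * a i, fun i => hm i, ?_, ?_⟩
      · rw [hhom m a, hfa, mul_zero]
      · calc s ≤ (Finset.image (fun j => a (ι j)) Finset.univ).card := hcard
          _ = (Finset.image (fun j => m * a (ι j)) Finset.univ).card := by
            rw [show (fun j => m * a (ι j)) = (fun x => m * x) ∘ (fun j => a (ι j)) from rfl,
              ← Finset.image_image,
              Finset.card_image_of_injective _ (mul_right_injective m)]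
    · intro A hA
      have hB : {k : ℕ+ | {m : ℕ+ | m * k ∈ A} ∈ U} ∈ V := hA
      obtain ⟨k, hk⟩ := V.nonempty_of_mem hB
      obtain ⟨a, ha, hfa, hcard⟩ := hU _ hk
      refine ⟨fun i => a i * k, fun i => ha i, ?_, ?_⟩
      · have : (fun i => a i * k) = (fun i => k * a i) := by
          funext i; exact mul_comm _ _
        rw [this, hhom k a, hfa, mul_zero]
      · calc s ≤ (Finset.image (fun j => a (ι j)) Finset.univ).card := hcard
          _ = (Finset.image (fun j => a (ι j) * k) Finset.univ).card := by
            rw [show (fun j => a (ι j) * k) = (fun x => x * k) ∘ (fun j => a (ι j)) from rfl,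
              ← Finset.image_image,
              Finset.card_image_of_injective _ (mul_left_injective k)]
end

section
/- Let f : ℕⁿ → ℤ be homogeneous (there is ℓ ∈ ℕ with f(λx₁,…,λxₙ) = λ^ℓ · f(x₁,…,xₙ) for all λ, x₁,…,xₙ ∈ ℕ) and partition regular on ℕ with injectivity |{x_{i₁},…,x_{i_p}}| ≥ s. If an ultrafilter U on ℕ belongs to every nonempty closed two-sided ideal of (βℕ, ⊙) (equivalently, to the closure of the minimal two-sided ideal K(βℕ, ⊙)), then U is a PR-witness of f with injectivity |{x_{i₁},…,x_{i_p}}| ≥ s. -/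
lemma mem_pseudoMul {W V : Ultrafilter ℕ+} {A : Set ℕ+} :
    A ∈ pseudoMul W V ↔ {k | {m | m * k ∈ A} ∈ V} ∈ W := by
  change A ∈ (Filter.bind ↑W fun k => ↑(V.map fun m => m * k)) ↔ _
  rw [Filter.mem_bind']
  rfl

lemma card_image_scale {p : ℕ} (a : Fin p → ℕ+) (g : ℕ+ → ℕ+)
    (hg : Function.Injective g) :
    (Finset.image a Finset.univ).card = (Finset.image (fun j => g (a j)) Finset.univ).card := by
  have : Finset.image (fun j => g (a j)) Finset.univ
      = Finset.image g (Finset.image a Finset.univ) := by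
    rw [Finset.image_image]; rfl
  rw [this, Finset.card_image_of_injective _ hg]

/-- If `f` is homogeneous and partition regular with injectivity
`|{x_{i₁},…,x_{i_p}}| ≥ s`, then every ultrafilter belonging to all nonempty
closed two-sided ideals of `(βℕ, ⊙)` (equivalently, every ultrafilter in the
closure of the minimal two-sided ideal `K(βℕ,⊙)`) is a PR-witness of `f` with
that injectivity. -/
theorem mem_closed_ideals_isWitness {n p : ℕ}
    (f : (Fin n → ℕ+) → ℤ) (ι : Fin p → Fin n) (s : ℕ) (ℓ : ℕ)
    (hhom : ∀ (lam : ℕ+) (x : Fin n → ℕ+),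
      f (fun i => lam * x i) = ((lam : ℕ) : ℤ) ^ ℓ * f x)
    (hPR : IsPRwithInj f ι s)
    (U : Ultrafilter ℕ+)
    (hU : ∀ I : Set (Ultrafilter ℕ+), I.Nonempty → IsClosed I →
      (∀ W ∈ I, ∀ V : Ultrafilter ℕ+, pseudoMul W V ∈ I ∧ pseudoMul V W ∈ I) →
      U ∈ I) :
    IsPRWitness f ι s U := by
  classical
  set Sol : Set ℕ+ → Prop := fun A => ∃ a : Fin n → ℕ+,
    (∀ i, a i ∈ A) ∧ f a = 0 ∧
    s ≤ (Finset.image (fun j => a (ι j)) Finset.univ).card with hSolDef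
  set I : Set (Ultrafilter ℕ+) := {u | ∀ A ∈ u, Sol A} with hIdef
  suffices hUI : U ∈ I by exact fun A hA => hUI A hA
  apply hU
  · -- Nonempty: build an ultrafilter containing complements of all solution-free sets
    set S : Set (Set ℕ+) := {B | ¬ Sol Bᶜ} with hSdef
    have hNB : Filter.NeBot (Filter.generate S) := by
      rw [Filter.generate_neBot_iff]
      intro t hts htf
      by_contra hempty
      rw [Set.not_nonempty_iff_eq_empty] at hempty
      -- t is a finite family whose complements cover ℕ+
      have hcover : ∀ m : ℕ+, ∃ B ∈ t, m ∈ Bᶜ := by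
        intro m
        by_contra h
        push_neg at h
        have : m ∈ ⋂₀ t := fun B hB => by
          have := h B hB; simpa using this
        simp [hempty] at this
      have htne : t.Nonempty := by
        rcases hcover 1 with ⟨B, hB, _⟩; exact ⟨B, hB⟩
      -- color each m by a chosen member of t whose complement contains m
      set ft := htf.toFinset with hft
      have hftne : ft.Nonempty := by
        rcases htne with ⟨B, hB⟩; exact ⟨B, by simp [hft, hB]⟩
      set r := ft.card with hr
      have choice : ∀ m : ℕ+, {B : Set ℕ+ // B ∈ t ∧ m ∈ Bᶜ} := fun m =>
        ⟨(hcover m).choose, (hcover m).choose_spec⟩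
      have e := ft.equivFin
      obtain ⟨a, hmono, hfa, hcard⟩ := hPR r
        (fun m => e ⟨(choice m).1, by simp [hft, (choice m).2.1]⟩)
      rcases Nat.eq_zero_or_pos n with hn | hn
      · -- n = 0: membership is vacuous, any solution-free set gets a solution
        rcases htne with ⟨B, hB⟩
        exact (hts hB) ⟨a, fun i => absurd i.2 (by omega), hfa, hcard⟩
      · set i0 : Fin n := ⟨0, hn⟩
        set B := (choice (a i0)).1 with hB
        have hBt : B ∈ t := (choice (a i0)).2.1
        refine (hts hBt) ⟨a, ?_, hfa, hcard⟩
        intro i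
        have heq : (choice (a i)).1 = B :=
          Subtype.ext_iff.mp (e.injective (hmono i i0))
        have := (choice (a i)).2.2
        rwa [heq] at this
    obtain ⟨u, hu⟩ := Filter.exists_ultrafilter_le (Filter.generate S)
    refine ⟨u, fun A hA => ?_⟩
    by_contra hnoSol
    have : Aᶜ ∈ u := hu (Filter.mem_generate_of_mem (by simpa [hSdef] using hnoSol))
    exact absurd (u.toFilter.inter_mem hA this) (by simp)
  · -- Closed
    have hIeq : I = ⋂ (A : {A : Set ℕ+ // ¬ Sol A}), {u : Ultrafilter ℕ+ | (A : Set ℕ+) ∈ u}ᶜ := by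
      ext u
      simp only [hIdef, Set.mem_setOf_eq, Set.mem_iInter, Set.mem_compl_iff, Subtype.forall]
      constructor
      · intro h A hA hAu
        exact hA (h A hAu)
      · intro h A hAu
        by_contra hA
        exact h A hA hAu
    rw [hIeq]
    exact isClosed_iInter fun A => (ultrafilter_isOpen_basic _).isClosed_compl
  · -- two-sided ideal
    intro W hW V
    constructor
    · intro A hA
      rw [mem_pseudoMul] at hA
      obtain ⟨a, haB, hfa, hcard⟩ := hW _ hA
      have hint : (⋂ i, {m : ℕ+ | m * a i ∈ A}) ∈ V :=
        Filter.iInter_mem.2 fun i => haB i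
      obtain ⟨m, hm⟩ := V.toFilter.nonempty_of_mem hint
      simp only [Set.mem_iInter, Set.mem_setOf_eq] at hm
      refine ⟨fun i => m * a i, fun i => hm i, ?_, ?_⟩
      · rw [hhom m a, hfa, mul_zero]
      · calc s ≤ (Finset.image (fun j => a (ι j)) Finset.univ).card := hcard
          _ = (Finset.image (fun j => m * a (ι j)) Finset.univ).card :=
            card_image_scale (fun j => a (ι j)) (fun x => m * x) (mul_right_injective m)
    · intro A hA
      rw [mem_pseudoMul] at hA
      obtain ⟨k, hk⟩ := V.toFilter.nonempty_of_mem hA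
      obtain ⟨a, haB, hfa, hcard⟩ := hW _ hk
      refine ⟨fun i => a i * k, fun i => haB i, ?_, ?_⟩
      · have : (fun i => a i * k) = fun i => k * a i := by
          funext i; exact mul_comm _ _
        rw [this, hhom k a, hfa, mul_zero]
      · calc s ≤ (Finset.image (fun j => a (ι j)) Finset.univ).card := hcard
          _ = (Finset.image (fun j => a (ι j) * k) Finset.univ).card :=
            card_image_scale (fun j => a (ι j)) (fun x => x * k) (mul_left_injective k)
end

section
/- Let f : (ℚ₊)ⁿ → ℚ be homogeneous of degree ℓ ∈ ℤ, i.e. f(λx₁,…,λxₙ) = λ^ℓ · f(x₁,…,xₙ) for all positive rationals λ, x₁,…,xₙ. If the equation f(x₁,…,xₙ) = 0 is partition regular on ℕ with injectivity |{x_{i₁},…,x_{i_p}}| ≥ s, then the equation f(1/x₁,…,1/xₙ) = 0 is also partition regular on ℕ with injectivity |{x_{i₁},…,x_{i_p}}| ≥ s; that is, for every finite partition of ℕ there are monochromatic a₁,…,aₙ with f(1/a₁,…,1/aₙ) = 0 and |{a_{i₁},…,a_{i_p}}| ≥ s. -/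
/-!
By compactness, partition regularity of `f = 0` provides a finite set `S` such that every
`r`-colouring of `ℕ+` has a monochromatic solution with the required injectivity inside `S`.
Put `L = ∏_{k ∈ S} k` and, given a colouring `C`, colour `k` by `C (L / k)`. A solution `a`
inside `S` for this colouring gives the `C`-monochromatic tuple `b i = L / a i`, whose
reciprocals `a i / L` are a scaling of `a`, so `f (1 / b) = L ^ (-ℓ) * f a = 0` by homogeneity.
Since `k ↦ L / k` is injective on the divisors of `L`, the injectivity condition carries over.

`ℕ+` plays the role of the paper's `ℕ` (the positive integers).
-/

open Filter in
theorem exists_finset_of_forall_exists_monochromatic {α ι κ : Type*} [Finite ι] [Finite κ]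
    (P : (ι → α) → Prop) (h : ∀ C : α → κ, ∃ a, (∀ i j, C (a i) = C (a j)) ∧ P a) :
    ∃ S : Finset α, ∀ C : α → κ, ∃ a, (∀ i, a i ∈ S) ∧ (∀ i j, C (a i) = C (a j)) ∧ P a := by
  classical
  have := Fintype.ofFinite ι
  by_contra! hbad
  choose D hD using hbad
  let U := Ultrafilter.of (atTop : Filter (Finset α))
  -- `C` colours each point by the colour that `D S` gives it for `U`-almost every `S`.
  have hlim (x : α) : ∃ c, ∀ᶠ S in (U : Filter (Finset α)), D S x = c :=
    Ultrafilter.eventually_exists_iff.1 (.of_forall fun S => ⟨_, rfl⟩)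
  choose C hC using hlim
  obtain ⟨a, hmono, ha⟩ := h C
  have hcontains : ∀ᶠ S in (U : Filter (Finset α)), ∀ i, a i ∈ S :=
    Ultrafilter.of_le _ <| (eventually_ge_atTop (Finset.univ.image a)).mono
      fun S hS i => hS (Finset.mem_image_of_mem a (Finset.mem_univ i))
  obtain ⟨S, haS, hDC⟩ := (hcontains.and (eventually_all.2 fun i => hC (a i))).exists
  exact hD S a haS (fun i j => by rw [hDC i, hDC j, hmono]) ha

theorem coe_toPNat'_div {L k : ℕ} (hL : L ≠ 0) (hk : k ∣ L) : ((L / k).toPNat' : ℕ) = L / k :=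
  Nat.toPNat'_coe _ ▸ if_pos (Nat.div_pos (Nat.le_of_dvd (Nat.pos_of_ne_zero hL) hk)
    (Nat.pos_of_dvd_of_pos hk (Nat.pos_of_ne_zero hL)))

theorem injOn_toPNat'_div {L : ℕ} (hL : L ≠ 0) :
    Set.InjOn (fun k : ℕ+ => (L / k).toPNat') {k | (k : ℕ) ∣ L} := by
  intro x hx y hy hxy
  have hdiv : L / (x : ℕ) = L / (y : ℕ) := by
    rw [← coe_toPNat'_div hL hx, ← coe_toPNat'_div hL hy]
    exact congrArg _ hxy
  exact PNat.coe_injective <| by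
    rw [← Nat.div_div_self hx hL, ← Nat.div_div_self hy hL, hdiv]

theorem inv_cast_toPNat'_div {L k : ℕ} (hL : L ≠ 0) (hk : k ∣ L) :
    (((L / k).toPNat' : ℕ) : ℚ)⁻¹ = (L : ℚ)⁻¹ * k := by
  have hk0 : (k : ℚ) ≠ 0 := by exact_mod_cast ne_zero_of_dvd_ne_zero hL hk
  rw [coe_toPNat'_div hL hk, Nat.cast_div hk hk0, inv_div, div_eq_inv_mul]

/-- If `f` is homogeneous of degree `ℓ ∈ ℤ` (on positive rationals) and the
equation `f(x₁,…,xₙ) = 0` is partition regular on `ℕ` with injectivity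
`|{x_{i₁},…,x_{i_p}}| ≥ s`, then so is the equation `f(1/x₁,…,1/xₙ) = 0`. -/
theorem pr_of_inverses {n p : ℕ} (f : (Fin n → ℚ) → ℚ) (ι : Fin p → Fin n)
    (s : ℕ) (ℓ : ℤ)
    (hhom : ∀ lam : ℚ, 0 < lam → ∀ x : Fin n → ℚ, (∀ i, 0 < x i) →
      f (fun i => lam * x i) = lam ^ ℓ * f x)
    (hPR : ∀ (r : ℕ) (C : ℕ+ → Fin r), ∃ a : Fin n → ℕ+,
      (∀ i j, C (a i) = C (a j)) ∧ f (fun i => ((a i : ℕ) : ℚ)) = 0 ∧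
      s ≤ (Finset.image (fun j => a (ι j)) Finset.univ).card) :
    ∀ (r : ℕ) (C : ℕ+ → Fin r), ∃ a : Fin n → ℕ+,
      (∀ i j, C (a i) = C (a j)) ∧ f (fun i => (((a i : ℕ) : ℚ))⁻¹) = 0 ∧
      s ≤ (Finset.image (fun j => a (ι j)) Finset.univ).card := by
  intro r C
  obtain ⟨S, hS⟩ := exists_finset_of_forall_exists_monochromatic _ (hPR r)
  set L := ∏ k ∈ S, (k : ℕ)
  have hL : L ≠ 0 := Finset.prod_ne_zero_iff.2 fun k _ => k.ne_zero
  let g : ℕ+ → ℕ+ := fun k => (L / k).toPNat'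
  obtain ⟨a, haS, hmono, hzero, hcard⟩ := hS (C ∘ g)
  have hdvd i : (a i : ℕ) ∣ L := Finset.dvd_prod_of_mem _ (haS i)
  refine ⟨g ∘ a, hmono, ?_, ?_⟩
  · have hpos i : (0 : ℚ) < (a i : ℕ) := by exact_mod_cast (a i).pos
    simp only [Function.comp_apply, g, inv_cast_toPNat'_div hL (hdvd _)]
    rw [hhom _ (by positivity) _ hpos, hzero, mul_zero]
  · have himage : Finset.image (fun j => (g ∘ a) (ι j)) Finset.univ =
        (Finset.image (fun j => a (ι j)) Finset.univ).image g := by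
      rw [Finset.image_image]; rfl
    rw [himage, Finset.card_image_of_injOn]
    · exact hcard
    · refine (injOn_toPNat'_div hL).mono ?_
      simp only [Finset.coe_image, Finset.coe_univ, Set.image_univ]
      rintro _ ⟨j, rfl⟩
      exact hdvd (ι j)
end

section
/- Let n, k ≥ 2. For every finite partition of ℕ there exist monochromatic natural numbers x₁,…,xₙ, y₁,…,y_k, with x₁,…,xₙ pairwise distinct and y₁,…,y_k pairwise distinct, such that ∑_{i=1}^n x_i = ∏_{j=1}^k y_j. -/
/-!
Let `Σₙ(A)` be the set of sums of `n` distinct elements of `A ⊆ ℕ+`, and `Γₙ` the set of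
ultrafilters `q` on `ℕ+` with `Σₙ(A) ∈ q` for every `A ∈ q`. An additive idempotent `p` lies in
`Γₙ`: it is nonprincipal, and `p + p = p` lets one add to an `a ∈ A` a sum of `n - 1` distinct
elements of `A \ {a}`. Moreover `q * q' ∈ Γₙ` whenever `q' ∈ Γₙ`, because `a · Σₙ(a⁻¹A) ⊆ Σₙ(A)`.
So `Γₙ` is a nonempty compact subsemigroup of `βℕ+` and contains a multiplicative idempotent `q`,
nonprincipal as `n ≥ 2`. If `A` is the colour class in `q`, then `A ∩ Σₙ(A) ∈ q`, and idempotence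
yields distinct `y₁, …, y_k ∈ A` whose product lies in `Σₙ(A)`.
-/

open Filter Set

attribute [local instance] Ultrafilter.mul Ultrafilter.semigroup
  Ultrafilter.add Ultrafilter.addSemigroup

namespace Ultrafilter

variable {M : Type*}

@[to_additive]
theorem mem_mul_iff [Mul M] {U V : Ultrafilter M} {s : Set M} :
    s ∈ U * V ↔ {a | {b | a * b ∈ s} ∈ V} ∈ U :=
  Iff.rfl

theorem pure_add_pure [Add M] (a b : M) : (pure a : Ultrafilter M) + pure b = pure (a + b) :=
  coe_injective <| Filter.ext fun _ => Iff.rfl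

theorem le_cofinite_of_add_self [Add M] (hM : ∀ a : M, a + a ≠ a) {p : Ultrafilter M}
    (hp : p + p = p) : (p : Filter M) ≤ cofinite := by
  refine p.le_cofinite_or_eq_pure.resolve_right ?_
  rintro ⟨a, rfl⟩
  exact hM a (pure_injective (by rw [← pure_add_pure, hp]))

theorem exists_injective_prod_mem [CommMonoid M] {q : Ultrafilter M} (hq : q * q = q)
    (hcof : (q : Filter M) ≤ cofinite) (k : ℕ) {D : Set M} (hD : D ∈ q) :
    ∃ y : Fin (k + 1) → M, Function.Injective y ∧ (∀ j, y j ∈ D) ∧ ∏ j, y j ∈ D := by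
  induction k generalizing D with
  | zero =>
    obtain ⟨a, ha⟩ := nonempty_of_mem hD
    exact ⟨fun _ => a, fun _ _ _ => Subsingleton.elim (α := Fin 1) _ _, fun _ => ha,
      by simpa using ha⟩
  | succ k ih =>
    have hDD : {a | {b | a * b ∈ D} ∈ q} ∈ q := by rwa [← hq, mem_mul_iff] at hD
    obtain ⟨a, haD, ha⟩ := nonempty_of_mem (inter_mem hD hDD)
    have hD' : (D ∩ {b | a * b ∈ D}) \ {a} ∈ q :=
      sdiff_mem (inter_mem hD ha) (hcof (finite_singleton a).compl_mem_cofinite)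
    obtain ⟨y, hy, hyD, hprod⟩ := ih hD'
    refine ⟨Fin.cons a y, Fin.cons_injective_of_injective (fun ⟨j, hj⟩ => (hyD j).2 hj) hy,
      Fin.forall_fin_succ.2 ⟨haD, fun j => (hyD j).1.1⟩, ?_⟩
    rw [Fin.prod_cons]
    exact hprod.1.2

end Ultrafilter

namespace PNat

def distinctSums (n : ℕ) (A : Set ℕ+) : Set ℕ+ :=
  {s | ∃ x : Fin n → ℕ+, Function.Injective x ∧ (∀ i, x i ∈ A) ∧ (s : ℕ) = ∑ i, (x i : ℕ)}

theorem add_mem_distinctSums_succ {n : ℕ} {A : Set ℕ+} {a s : ℕ+} (ha : a ∈ A)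
    (hs : s ∈ distinctSums n (A \ {a})) : a + s ∈ distinctSums (n + 1) A := by
  obtain ⟨x, hx, hxA, hs⟩ := hs
  refine ⟨Fin.cons a x, Fin.cons_injective_of_injective (fun ⟨i, hi⟩ => (hxA i).2 hi) hx,
    Fin.forall_fin_succ.2 ⟨ha, fun i => (hxA i).1⟩, ?_⟩
  simp [Fin.sum_univ_succ, hs]

theorem mul_mem_distinctSums {n : ℕ} {A : Set ℕ+} {a s : ℕ+}
    (hs : s ∈ distinctSums n {b | a * b ∈ A}) : a * s ∈ distinctSums n A := by
  obtain ⟨x, hx, hxA, hs⟩ := hs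
  refine ⟨fun i => a * x i, fun i j h => hx (mul_left_cancel h), hxA, ?_⟩
  simp [hs, Finset.mul_sum]

theorem distinctSums_succ_mem_of_add_self {p : Ultrafilter ℕ+} (hp : p + p = p) (n : ℕ)
    {A : Set ℕ+} (hA : A ∈ p) : distinctSums (n + 1) A ∈ p := by
  have hcof :=
    Ultrafilter.le_cofinite_of_add_self (fun a h => by simpa using congrArg PNat.val h) hp
  induction n generalizing A with
  | zero =>
    exact mem_of_superset hA fun a ha =>
      ⟨fun _ => a, fun _ _ _ => Subsingleton.elim (α := Fin 1) _ _, fun _ => ha, by simp⟩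
  | succ n ih =>
    have hsum : distinctSums (n + 2) A ∈ p + p := by
      rw [Ultrafilter.mem_add_iff]
      refine mem_of_superset hA fun a ha => ?_
      refine mem_of_superset (ih ?_) fun s hs => add_mem_distinctSums_succ ha hs
      exact sdiff_mem hA (hcof (finite_singleton a).compl_mem_cofinite)
    rwa [hp] at hsum

def distinctSumsClosed (n : ℕ) : Set (Ultrafilter ℕ+) :=
  {q | ∀ A ∈ q, distinctSums n A ∈ q}

theorem isClosed_distinctSumsClosed (n : ℕ) : IsClosed (distinctSumsClosed n) := by
  have : distinctSumsClosed n = ⋂ A : Set ℕ+, {q | Aᶜ ∪ distinctSums n A ∈ q} := by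
    ext q
    simp [distinctSumsClosed, Ultrafilter.union_mem_iff, Ultrafilter.compl_mem_iff_notMem,
      imp_iff_not_or]
  rw [this]
  exact isClosed_iInter fun A => ultrafilter_isClosed_basic _

theorem mul_mem_distinctSumsClosed {n : ℕ} (q : Ultrafilter ℕ+) {q' : Ultrafilter ℕ+}
    (hq' : q' ∈ distinctSumsClosed n) : q * q' ∈ distinctSumsClosed n := fun _ hA =>
  Ultrafilter.mem_mul_iff.2 <| mem_of_superset (Ultrafilter.mem_mul_iff.1 hA) fun _ ha =>
    mem_of_superset (hq' _ ha) fun _ hs => mul_mem_distinctSums hs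

theorem exists_mul_self_mem_distinctSumsClosed {n : ℕ} (hn : n ≠ 0) :
    ∃ q ∈ distinctSumsClosed n, q * q = q := by
  obtain ⟨m, rfl⟩ := Nat.exists_eq_add_one_of_ne_zero hn
  have : Nonempty (Ultrafilter ℕ+) := ⟨pure 1⟩
  obtain ⟨p, hp⟩ := exists_idempotent_of_compact_t2_of_continuous_add_left
    (M := Ultrafilter ℕ+) Ultrafilter.continuous_add_left
  exact exists_idempotent_in_compact_subsemigroup Ultrafilter.continuous_mul_left _
    ⟨p, fun _ hA => distinctSums_succ_mem_of_add_self hp m hA⟩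
    (isClosed_distinctSumsClosed _).isCompact (fun q _ _ hq' => mul_mem_distinctSumsClosed q hq')

theorem le_cofinite_of_mem_distinctSumsClosed {n : ℕ} (hn : 2 ≤ n) {q : Ultrafilter ℕ+}
    (hq : q ∈ distinctSumsClosed n) : (q : Filter ℕ+) ≤ cofinite := by
  refine q.le_cofinite_or_eq_pure.resolve_right ?_
  rintro ⟨a, rfl⟩
  obtain ⟨-, x, hx, hxa, -⟩ := Ultrafilter.nonempty_of_mem (hq {a} rfl)
  have := hx ((hxa ⟨0, by omega⟩).trans (hxa ⟨1, by omega⟩).symm)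
  simp at this

end PNat

open PNat in
/-- For `n, k ≥ 2`, every finite coloring of `ℕ` admits monochromatic
`x₁,…,xₙ, y₁,…,y_k`, with the `xᵢ` pairwise distinct and the `yⱼ` pairwise
distinct, such that `x₁ + … + xₙ = y₁ ⋯ y_k`. -/
theorem pr_sum_eq_product {n k : ℕ} (hn : 2 ≤ n) (hk : 2 ≤ k) :
    ∀ (r : ℕ) (C : ℕ+ → Fin r), ∃ (x : Fin n → ℕ+) (y : Fin k → ℕ+),
      (∀ i j, C (x i) = C (x j)) ∧
      (∀ i j, C (x i) = C (y j)) ∧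
      Function.Injective x ∧ Function.Injective y ∧
      (∑ i, (x i : ℕ)) = ∏ j, (y j : ℕ) := by
  intro r C
  obtain ⟨q, hqΓ, hqq⟩ := exists_mul_self_mem_distinctSumsClosed (n := n) (by omega)
  obtain ⟨c, hc⟩ := (q.map C).eq_pure_of_finite
  have hA : C ⁻¹' {c} ∈ q := Ultrafilter.mem_map.1 (by rw [hc]; rfl)
  obtain ⟨k, rfl⟩ := Nat.exists_eq_add_one_of_ne_zero (by omega : k ≠ 0)
  obtain ⟨y, hy, hyA, -, x, hx, hxA, hsum⟩ := q.exists_injective_prod_mem hqq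
    (le_cofinite_of_mem_distinctSumsClosed hn hqΓ) k (inter_mem hA (hqΓ _ hA))
  refine ⟨x, y, fun i j => (hxA i).trans (hxA j).symm,
    fun i j => (hxA i).trans (hyA j).1.symm, hx, hy, ?_⟩
  rw [← hsum]
  exact map_prod PNat.coeMonoidHom y Finset.univ
end

section
/- Let n ≥ 3, let c₁,…,cₙ be nonzero integers such that ∑_{j∈J} c_j = 0 for some nonempty J ⊆ {1,…,n}, and for each i = 1,…,n let k_i ≥ 2. Then the equation ∑_{i=1}^n c_i · ∏_{j=1}^{k_i} y_{i,j} = 0 is partition regular on ℕ with full injectivity: for every finite partition of ℕ there is a monochromatic solution in which all the variables y_{i,j} (i = 1,…,n, j = 1,…,k_i) take pairwise distinct values. -/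
/-!
The ultrafilters on `ℕ+` each of whose members contains solutions of the linear equation
`∑ cᵢ wᵢ = 0` with arbitrarily large entries form a closed left ideal of `(βℕ+, ·)`, nonempty by
Rado's theorem for a single equation (proved from a Brauer-type strengthening of van der Waerden's
theorem); so it contains an idempotent `u`. Let `A ∈ u` be a colour class and `w` a linear
solution in `A⋆ = {x ∈ A | x⁻¹A ∈ u}`.
Then there is a rapidly increasing string `z₀, …, z_{L-1}`, one term per variable `y_{i,j}`, such
that every nonempty subproduct `∏_S z` and every `wᵢ ∏_S z` lies in `A`. Put
`y_{i,j} = z_{(i,j)}` for `j ≠ 0`, and `y_{i,0} = wᵢ ∏ z` over all slots except `(i,j)`, `j ≠ 0`.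
Every monomial `∏ⱼ y_{i,j}` is then `wᵢ ∏_{all slots} z`, so the equation reduces to the linear
one, and since `z` grows fast, distinct slot sets give distinct products.
-/

open Finset Function

attribute [local instance] Ultrafilter.semigroup Ultrafilter.mul

theorem exists_bound_mono_arithProg {κ : Type*} [Finite κ] (t : ℕ) :
    ∃ N, ∀ C : ℕ → κ, ∃ a d, 0 < a ∧ 0 < d ∧ a + t * d ≤ N ∧ ∀ s ≤ t, C (a + s * d) = C a := by
  classical
  obtain ⟨ι, _, hι⟩ := Combinatorics.Line.exists_mono_in_high_dimension (Fin (t + 1)) κ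
  refine ⟨1 + Fintype.card ι * t, fun C => ?_⟩
  obtain ⟨l, c, hl⟩ := hι fun v => C (1 + ∑ i, (v i : ℕ))
  set m : Finset ι := {i | l.idxFun i = none}
  have hline (x : Fin (t + 1)) : ∑ i, (l x i : ℕ) = ∑ i, (l 0 i : ℕ) + #m * x := by
    have (i : ι) : (l x i : ℕ) = l 0 i + if i ∈ m then (x : ℕ) else 0 := by
      cases h : l.idxFun i <;> simp [m, h]
    rw [sum_congr rfl fun i _ => this i, sum_add_distrib, sum_ite_mem, univ_inter, sum_const,
      smul_eq_mul]
  have hcolour (x : Fin (t + 1)) : C (1 + ∑ i, (l 0 i : ℕ) + #m * x) = c := by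
    rw [add_assoc, ← hline]; exact hl x
  refine ⟨1 + ∑ i, (l 0 i : ℕ), #m, by omega,
    card_pos.mpr ⟨_, mem_filter.mpr ⟨mem_univ _, l.proper.choose_spec⟩⟩, ?_, fun s hs => ?_⟩
  · have hle : ∑ i, (l (Fin.last t) i : ℕ) ≤ Fintype.card ι * t := by
      simpa using sum_le_card_nsmul univ _ t fun i _ => Fin.is_le _
    have hlast := hline (Fin.last t)
    rw [Fin.val_last] at hlast
    rw [mul_comm t]
    omega
  · simpa [mul_comm] using (hcolour ⟨s, by omega⟩).trans (hcolour 0).symm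

theorem exists_bound_mono_arithProg_and_mul {κ : Type*} [Finite κ] (Λ M : ℕ) (hΛ : 0 < Λ)
    (m : ℕ) : ∃ N, ∀ (C : ℕ → κ) (K : Finset κ), #K ≤ m → (∀ x, 0 < x → x ≤ N → C x ∈ K) →
      ∃ a d, 0 < a ∧ 0 < d ∧ a + M * d ≤ N ∧ Λ * d ≤ N ∧
        ∀ μ ≤ M, C (a + μ * d) = C (Λ * d) := by
  classical
  induction m with
  | zero =>
    refine ⟨1, fun C K hK hC => ?_⟩
    simpa [card_eq_zero.mp (Nat.le_zero.mp hK)] using hC 1 one_pos le_rfl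
  | succ m ih =>
    obtain ⟨N', hN'⟩ := ih
    obtain ⟨Nv, hvdw⟩ := exists_bound_mono_arithProg (κ := κ) (M * N' + 1)
    refine ⟨Nv * (Λ * N' + 1), fun C K hK hC => ?_⟩
    have hbound {x y : ℕ} (hx : x ≤ N') (hy : y ≤ Nv) : Λ * (x * y) ≤ Nv * (Λ * N' + 1) :=
      calc Λ * (x * y) ≤ Λ * (N' * Nv) := by gcongr
        _ ≤ Nv * (Λ * N' + 1) := by nlinarith
    obtain ⟨a₀, d₀, ha₀, hd₀, hNv, hmono⟩ := hvdw C
    have hd₀Nv : d₀ ≤ Nv := by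
      have : d₀ ≤ (M * N' + 1) * d₀ := Nat.le_mul_of_pos_left d₀ (by omega)
      omega
    have hNvN : Nv ≤ Nv * (Λ * N' + 1) := Nat.le_mul_of_pos_right _ (by omega)
    -- Either some `Λ μ d₀` has the colour of the progression, or `x ↦ C (Λ x d₀)` avoids that
    -- colour on `[1, N']` and the induction hypothesis applies to it.
    by_cases hhit : ∃ μ, 0 < μ ∧ μ ≤ N' ∧ C (Λ * (μ * d₀)) = C a₀
    · obtain ⟨μ, hμ, hμN', hCμ⟩ := hhit
      refine ⟨a₀, μ * d₀, ha₀, by positivity, ?_, hbound hμN' hd₀Nv, fun ν hν => ?_⟩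
      · have : M * (μ * d₀) ≤ (M * N' + 1) * d₀ :=
          calc M * (μ * d₀) ≤ M * (N' * d₀) := by gcongr
            _ ≤ (M * N' + 1) * d₀ := by rw [← mul_assoc]; gcongr; omega
        omega
      · rw [hCμ, ← hmono (ν * μ) (by nlinarith), mul_assoc]
    · push Not at hhit
      have hK' : #(K.erase (C a₀)) ≤ m := by
        rw [card_erase_of_mem (hC a₀ ha₀ (by omega))]; omega
      obtain ⟨a, d, ha, hd, haN', hdN', hmono'⟩ := hN' (fun x => C (Λ * (x * d₀))) _ hK'
        fun x hx hxN' => mem_erase.mpr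
          ⟨hhit x hx hxN', hC _ (by positivity) (hbound hxN' hd₀Nv)⟩
      refine ⟨Λ * (a * d₀), Λ * (d * d₀), by positivity, by positivity, ?_, ?_,
        fun μ hμ => ?_⟩
      · calc Λ * (a * d₀) + M * (Λ * (d * d₀)) = Λ * ((a + M * d) * d₀) := by ring
          _ ≤ _ := hbound haN' hd₀Nv
      · calc Λ * (Λ * (d * d₀)) = Λ * ((Λ * d) * d₀) := by ring
          _ ≤ _ := hbound hdN' hd₀Nv
      · convert hmono' μ hμ using 2 <;> ring

theorem exists_mono_arithProg_and_mul {κ : Type*} [Finite κ] (Λ M : ℕ) (hΛ : 0 < Λ)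
    (C : ℕ → κ) : ∃ a d, 0 < a ∧ 0 < d ∧ ∀ μ ≤ M, C (a + μ * d) = C (Λ * d) := by
  classical
  have := Fintype.ofFinite κ
  obtain ⟨N, hN⟩ := exists_bound_mono_arithProg_and_mul (κ := κ) Λ M hΛ (Fintype.card κ)
  obtain ⟨a, d, ha, hd, -, -, hmono⟩ := hN C univ card_univ.le fun x _ _ => mem_univ _
  exact ⟨a, d, ha, hd, hmono⟩

theorem exists_mono_pos_solution {n : ℕ} (c : Fin n → ℤ) {J : Finset (Fin n)} {j₀ : Fin n}
    (hj₀ : j₀ ∈ J) (hc : c j₀ ≠ 0) (hsum : ∑ j ∈ J, c j = 0) {κ : Type*} [Finite κ]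
    (C : ℕ → κ) :
    ∃ x : Fin n → ℕ, (∀ i, 0 < x i) ∧ (∀ i i', C (x i) = C (x i')) ∧
      ∑ i, c i * (x i : ℤ) = 0 := by
  classical
  set σ := ∑ i ∈ Jᶜ, c i
  set e := -(c j₀ * σ)
  set μ : Fin n → ℕ := fun i => if i = j₀ then (e.natAbs + e).toNat else e.natAbs
  have hμ (i : Fin n) : (μ i : ℤ) = e.natAbs + if i = j₀ then e else 0 := by
    by_cases h : i = j₀ <;> simp only [μ, h, if_true, if_false] <;> omega
  obtain ⟨a, d, ha, hd, hmono⟩ :=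
    exists_mono_arithProg_and_mul ((c j₀).natAbs ^ 2) (2 * e.natAbs) (by positivity) C
  -- On `J` the `xᵢ` form a progression, off `J` they equal `c_{j₀}² d`; the sum is then
  -- `d (c_{j₀} e + c_{j₀}² σ) = 0`.
  set x : Fin n → ℕ := fun i => if i ∈ J then a + μ i * d else (c j₀).natAbs ^ 2 * d
  have hrow (i : Fin n) (hi : i ∈ J) : c i * (x i : ℤ) =
      (a + e.natAbs * d) * c i + d * if i = j₀ then c j₀ * e else 0 := by
    simp only [x, if_pos hi, Nat.cast_add, Nat.cast_mul, hμ]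
    split_ifs with h <;> [subst h; skip] <;> ring
  refine ⟨x, fun i => ?_, fun i i' => ?_, ?_⟩
  · simp only [x]; split_ifs <;> positivity
  · have hx (i : Fin n) : C (x i) = C ((c j₀).natAbs ^ 2 * d) := by
      simp only [x]
      split_ifs
      · exact hmono _ (by simp only [μ]; split_ifs <;> omega)
      · rfl
    rw [hx, hx]
  · rw [← sum_add_sum_compl J, sum_congr rfl hrow, sum_add_distrib, ← mul_sum, ← mul_sum,
      sum_ite_eq' J j₀, if_pos hj₀, hsum,
      sum_congr rfl fun i hi => by rw [show x i = _ from if_neg (mem_compl.mp hi)]]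
    push_cast
    rw [← sum_mul, sq_abs]
    simp only [e, σ]
    ring

theorem exists_mono_large_solution {n : ℕ} (c : Fin n → ℤ) {J : Finset (Fin n)} {j₀ : Fin n}
    (hj₀ : j₀ ∈ J) (hc : c j₀ ≠ 0) (hsum : ∑ j ∈ J, c j = 0) {κ : Type*} [Finite κ]
    (C : ℕ+ → κ) (N : ℕ) :
    ∃ w : Fin n → ℕ+, (∀ i, N < (w i : ℕ)) ∧ (∀ i i', C (w i) = C (w i')) ∧
      ∑ i, c i * ((w i : ℕ) : ℤ) = 0 := by
  obtain ⟨x, hpos, hmono, hx⟩ :=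
    exists_mono_pos_solution c hj₀ hc hsum fun m => C (N.succPNat * m.toPNat')
  refine ⟨fun i => N.succPNat * (x i).toPNat', fun i => ?_, hmono, ?_⟩
  · simp only [PNat.mul_coe, Nat.succPNat_coe, Nat.toPNat'_coe, if_pos (hpos i)]
    nlinarith [hpos i]
  · simp only [PNat.mul_coe, Nat.succPNat_coe, Nat.toPNat'_coe, if_pos (hpos _)]
    push_cast
    rw [← mul_zero ((N : ℤ) + 1), ← hx, mul_sum]
    exact sum_congr rfl fun i _ => by ring

namespace Ultrafilter

variable {α : Type*}

theorem exists_forall_mem_of_forall_cover {P : Set α → Prop}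
    (h : ∀ T : Finset (Set α), (∀ x, ∃ A ∈ T, x ∈ A) → ∃ A ∈ T, P A) :
    ∃ u : Ultrafilter α, ∀ A ∈ u, P A := by
  classical
  obtain ⟨u, hu⟩ := exists_ultrafilter_of_finite_inter_nonempty (compl '' {A | ¬ P A})
    fun T hT => by
      by_contra hempty
      obtain ⟨A, hA, hPA⟩ := h (T.image compl) fun x => by
        obtain ⟨B, hB, hxB⟩ : ∃ B ∈ T, x ∉ B := by
          by_contra! hx
          exact hempty ⟨x, fun B hB => hx B hB⟩
        exact ⟨Bᶜ, mem_image_of_mem _ hB, hxB⟩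
      obtain ⟨B, hB, rfl⟩ := mem_image.mp hA
      obtain ⟨A', hA', rfl⟩ := hT hB
      exact hA' (by simpa using hPA)
  exact ⟨u, fun A hA => by_contra fun hPA => compl_notMem_iff.mpr hA (hu ⟨A, hPA, rfl⟩)⟩

theorem isClosed_setOf_forall_mem (P : Set α → Prop) :
    IsClosed {u : Ultrafilter α | ∀ A ∈ u, P A} := by
  have : {u : Ultrafilter α | ∀ A ∈ u, P A} = ⋂ A ∈ {A | ¬ P A}, {u | A ∈ u}ᶜ := by
    ext u
    simp only [Set.mem_ofPred_eq, Set.mem_iInter, Set.mem_compl_iff]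
    exact forall_congr' fun A => not_imp_not.symm
  rw [this]
  exact isClosed_biInter fun A _ => (ultrafilter_isOpen_basic A).isClosed_compl

variable {M : Type*} [Semigroup M] {u : Ultrafilter M} {A : Set M}

/-- Hindman–Strauss's `A⋆`. -/
def starSet (u : Ultrafilter M) (A : Set M) : Set M := {x | x ∈ A ∧ {y | x * y ∈ A} ∈ u}

theorem starSet_mem (hu : u * u = u) (hA : A ∈ u) : u.starSet A ∈ u :=
  Filter.inter_mem hA (by rwa [← hu] at hA)

theorem preimage_mul_starSet_mem (hu : u * u = u) {x : M} (hx : x ∈ u.starSet A) :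
    {y | x * y ∈ u.starSet A} ∈ u := by
  have h := hx.2
  rw [← hu] at h
  filter_upwards [hx.2, h] with y hy hyz
  exact ⟨hy, by simpa [mul_assoc] using hyz⟩

end Ultrafilter

section SolutionUltrafilters

variable {n : ℕ} {c : Fin n → ℤ}

def HasLargeSolutions (c : Fin n → ℤ) (A : Set ℕ+) : Prop :=
  ∀ N : ℕ, ∃ w : Fin n → ℕ+, (∀ i, w i ∈ A ∧ N < (w i : ℕ)) ∧ ∑ i, c i * ((w i : ℕ) : ℤ) = 0

theorem HasLargeSolutions.of_preimage_mul {A : Set ℕ+} (m : ℕ+)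
    (h : HasLargeSolutions c {y | m * y ∈ A}) : HasLargeSolutions c A := fun N => by
  obtain ⟨w, hw, hsum⟩ := h N
  refine ⟨fun i => m * w i, fun i => ⟨(hw i).1, ?_⟩, ?_⟩
  · rw [PNat.mul_coe]
    exact (hw i).2.trans_le (Nat.le_mul_of_pos_left _ m.pos)
  · simp only [PNat.mul_coe, Nat.cast_mul, mul_left_comm (c _), ← mul_sum, hsum, mul_zero]

def solutionUltrafilters (c : Fin n → ℤ) : Set (Ultrafilter ℕ+) :=
  {u | ∀ A ∈ u, HasLargeSolutions c A}

theorem solutionUltrafilters_nonempty (c : Fin n → ℤ) {J : Finset (Fin n)} {j₀ : Fin n}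
    (hj₀ : j₀ ∈ J) (hc : c j₀ ≠ 0) (hsum : ∑ j ∈ J, c j = 0) :
    (solutionUltrafilters c).Nonempty := by
  refine Ultrafilter.exists_forall_mem_of_forall_cover fun T hT => ?_
  by_contra! hbad
  simp only [HasLargeSolutions, not_forall, not_exists, not_and] at hbad
  choose! N hN using hbad
  choose part hpart using hT
  obtain ⟨w, hlarge, hmono, hw⟩ := exists_mono_large_solution c hj₀ hc hsum
    (fun x => (⟨part x, (hpart x).1⟩ : T)) (T.sup N)
  have hpart_eq (i : Fin n) : part (w i) = part (w j₀) := congrArg Subtype.val (hmono i j₀)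
  refine hN _ (hpart (w j₀)).1 w (fun i => ⟨?_, ?_⟩) hw
  · exact hpart_eq i ▸ (hpart (w i)).2
  · exact (le_sup (hpart (w j₀)).1).trans_lt (hlarge i)

theorem mul_mem_solutionUltrafilters (u : Ultrafilter ℕ+) {v : Ultrafilter ℕ+}
    (hv : v ∈ solutionUltrafilters c) : u * v ∈ solutionUltrafilters c := fun A hA => by
  obtain ⟨m, hm⟩ := Ultrafilter.nonempty_of_mem (show {m | {y | m * y ∈ A} ∈ v} ∈ u from hA)
  exact (hv _ hm).of_preimage_mul m

theorem exists_idempotent_mem_solutionUltrafilters (c : Fin n → ℤ) {J : Finset (Fin n)}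
    {j₀ : Fin n} (hj₀ : j₀ ∈ J) (hc : c j₀ ≠ 0) (hsum : ∑ j ∈ J, c j = 0) :
    ∃ u ∈ solutionUltrafilters c, u * u = u :=
  exists_idempotent_in_compact_subsemigroup Ultrafilter.continuous_mul_left _
    (solutionUltrafilters_nonempty c hj₀ hc hsum)
    (Ultrafilter.isClosed_setOf_forall_mem _).isCompact
    fun u _ _ hv => mul_mem_solutionUltrafilters u hv

theorem setOf_lt_mem_of_mem_solutionUltrafilters (hn : 0 < n) {u : Ultrafilter ℕ+}
    (hu : u ∈ solutionUltrafilters c) (N : ℕ+) : {y | N < y} ∈ u := by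
  by_contra h
  obtain ⟨w, hw, -⟩ := hu _ (Ultrafilter.compl_mem_iff_notMem.mpr h) N
  exact (hw ⟨0, hn⟩).1 (PNat.coe_lt_coe _ _ |>.mp (hw ⟨0, hn⟩).2)

end SolutionUltrafilters

def Superincreasing (W : ℕ+) (z : ℕ → ℕ+) (L : ℕ) : Prop :=
  ∀ t < L, W * ∏ s ∈ range t, z s < z t

namespace Superincreasing

variable {W : ℕ+} {z : ℕ → ℕ+} {L : ℕ}

theorem mul_prod_lt_of_subset_range (hz : Superincreasing W z L) {b : ℕ+} (hb : b ≤ W)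
    {T : Finset ℕ} {t : ℕ} (hT : T ⊆ range t) (ht : t < L) : b * ∏ s ∈ T, z s < z t :=
  calc b * ∏ s ∈ T, z s ≤ W * ∏ s ∈ range t, z s :=
        mul_le_mul' hb (prod_le_prod_of_subset_of_one_le' hT fun _ _ _ => one_le)
    _ < z t := hz t ht

theorem mul_prod_lt_mul_prod (hz : Superincreasing W z (L + 1)) {a b : ℕ+} (hb : b ≤ W)
    {S T : Finset ℕ} (hLS : L ∈ S) (hT : T ⊆ range L) : b * ∏ s ∈ T, z s < a * ∏ s ∈ S, z s :=
  calc b * ∏ s ∈ T, z s < z L := hz.mul_prod_lt_of_subset_range hb hT L.lt_succ_self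
    _ ≤ ∏ s ∈ S, z s := single_le_prod' (fun _ _ => one_le) hLS
    _ ≤ a * ∏ s ∈ S, z s := le_mul_of_one_le_left' one_le

theorem eq_of_mul_prod_eq (hz : Superincreasing W z L) {a b : ℕ+} (ha : a ≤ W) (hb : b ≤ W)
    {S T : Finset ℕ} (hS : S ⊆ range L) (hT : T ⊆ range L)
    (h : a * ∏ s ∈ S, z s = b * ∏ s ∈ T, z s) : S = T := by
  induction L generalizing S T with
  | zero => rw [range_zero, subset_empty] at hS hT; rw [hS, hT]
  | succ L ih =>
    have hz' : Superincreasing W z L := fun t ht => hz t (ht.trans L.lt_succ_self)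
    have below {U : Finset ℕ} (hU : U ⊆ range (L + 1)) (hLU : L ∉ U) : U ⊆ range L := by
      rwa [range_add_one, subset_insert_iff_of_notMem hLU] at hU
    by_cases hLS : L ∈ S <;> by_cases hLT : L ∈ T
    · have herase {U : Finset ℕ} (hU : U ⊆ range (L + 1)) : U.erase L ⊆ range L := by
        rwa [range_add_one, subset_insert_iff] at hU
      rw [← mul_prod_erase S z hLS, ← mul_prod_erase T z hLT, mul_left_comm a,
        mul_left_comm b] at h
      rw [← insert_erase hLS, ← insert_erase hLT,
        ih hz' (herase hS) (herase hT) (mul_left_cancel h)]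
    · exact absurd h (hz.mul_prod_lt_mul_prod hb hLS (below hT hLT)).ne'
    · exact absurd h (hz.mul_prod_lt_mul_prod ha hLT (below hS hLS)).ne
    · exact ih hz' (below hS hLS) (below hT hLT) h

end Superincreasing

theorem exists_superincreasing_prod_mem {u : Ultrafilter ℕ+} (hu : u * u = u)
    (hlarge : ∀ N : ℕ+, {y | N < y} ∈ u) {D : Set ℕ+} (hD : D ∈ u) (W : ℕ+) (L : ℕ) :
    ∃ z, Superincreasing W z L ∧ ∀ S ⊆ range L, S.Nonempty → ∏ s ∈ S, z s ∈ D := by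
  -- Keeping the subproducts in `D⋆` is what lets the next term be chosen from a `u`-large set.
  suffices ∃ z, Superincreasing W z L ∧ ∀ S ⊆ range L, S.Nonempty → ∏ s ∈ S, z s ∈ u.starSet D
    from this.imp fun z hz => ⟨hz.1, fun S hS hne => (hz.2 S hS hne).1⟩
  induction L with
  | zero =>
    refine ⟨1, fun t ht => absurd ht t.not_lt_zero, fun S hS hne => ?_⟩
    rw [range_zero, subset_empty] at hS
    exact absurd (hS ▸ hne) Finset.not_nonempty_empty
  | succ L ih =>
    obtain ⟨z, hz, hzD⟩ := ih
    have hnext : {y | W * ∏ s ∈ range L, z s < y} ∩ (u.starSet D ∩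
        ⋂ S ∈ (range L).powerset.filter Finset.Nonempty, {y | (∏ s ∈ S, z s) * y ∈ u.starSet D})
        ∈ u :=
      Filter.inter_mem (hlarge _) <| Filter.inter_mem (Ultrafilter.starSet_mem hu hD) <|
        (Filter.biInter_finset_mem _).mpr fun S hS => by
          rw [mem_filter, mem_powerset] at hS
          exact Ultrafilter.preimage_mul_starSet_mem hu (hzD S hS.1 hS.2)
    obtain ⟨y, hy_large, hyD, hyS⟩ := Ultrafilter.nonempty_of_mem hnext
    have hagree {S : Finset ℕ} (hS : S ⊆ range L) :
        ∏ s ∈ S, (if s < L then z s else y) = ∏ s ∈ S, z s :=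
      prod_congr rfl fun s hs => if_pos (mem_range.mp (hS hs))
    refine ⟨fun s => if s < L then z s else y, fun t ht => ?_, fun S hS hne => ?_⟩
    · dsimp only
      rcases (Nat.lt_succ_iff_lt_or_eq.mp ht) with ht | rfl
      · rw [hagree (range_subset_range.mpr ht.le), if_pos ht]
        exact hz t ht
      · rwa [hagree subset_rfl, if_neg (lt_irrefl _)]
    · by_cases hLS : L ∈ S
      · have hsub : S.erase L ⊆ range L := by rwa [range_add_one, subset_insert_iff] at hS
        rw [← mul_prod_erase S _ hLS, if_neg (lt_irrefl _), hagree hsub]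
        rcases (S.erase L).eq_empty_or_nonempty with hemp | hne'
        · rwa [hemp, prod_empty, mul_one]
        · rw [mul_comm]
          exact Set.mem_iInter₂.mp hyS _ (mem_filter.mpr ⟨mem_powerset.mpr hsub, hne'⟩)
      · have hsub : S ⊆ range L := by
          rwa [range_add_one, subset_insert_iff_of_notMem hLS] at hS
        rw [hagree hsub]
        exact hzD S hsub hne

section SlotSupports

variable {n : ℕ} {k : Fin n → ℕ} (d : ∀ i, Fin (k i))

def offSlots (i : Fin n) : Finset (Σ i, Fin (k i)) :=
  ({d i}ᶜ : Finset (Fin (k i))).map (Embedding.sigmaMk i)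

-- The variable in slot `q` is a coefficient times the string's product over `slotSupport d q`;
-- the slot `d i` plays the role of `j = 0` in row `i`.
def slotSupport (q : Σ i, Fin (k i)) : Finset (Σ i, Fin (k i)) :=
  if q.2 = d q.1 then (offSlots d q.1)ᶜ else {q}

variable {d}

theorem fst_eq_of_mem_offSlots {p : Σ i, Fin (k i)} {i : Fin n} (h : p ∈ offSlots d i) :
    p.1 = i := by
  obtain ⟨j, -, rfl⟩ := mem_map.mp h
  rfl

theorem mk_mem_offSlots {i : Fin n} {j : Fin (k i)} : ⟨i, j⟩ ∈ offSlots d i ↔ j ≠ d i := by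
  simp [offSlots]

theorem mk_mem_compl_offSlots {i : Fin n} {j : Fin (k i)} :
    ⟨i, j⟩ ∈ (offSlots d i)ᶜ ↔ j = d i := by
  rw [mem_compl, mk_mem_offSlots, not_not]

theorem mem_slotSupport_self (q : Σ i, Fin (k i)) : q ∈ slotSupport d q := by
  unfold slotSupport
  split_ifs with h
  · exact mk_mem_compl_offSlots.mpr h
  · exact mem_singleton_self q

theorem slotSupport_injective (hd : ∀ i, ∃ j, j ≠ d i) : Injective (slotSupport d) := by
  rintro ⟨i, j⟩ ⟨i', j'⟩ h
  simp only [slotSupport] at h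
  split_ifs at h with h₁ h₂ h₂
  · obtain ⟨j'', hj''⟩ := hd i
    obtain rfl : i = i' := fst_eq_of_mem_offSlots (compl_injective h ▸ mk_mem_offSlots.mpr hj'')
    rw [h₁, h₂]
  · exact mem_singleton.mp (h ▸ mk_mem_compl_offSlots.mpr h₁)
  · exact (mem_singleton.mp (h ▸ mk_mem_compl_offSlots.mpr h₂)).symm
  · exact singleton_inj.mp h

theorem prod_prod_slotSupport {M : Type*} [CommMonoid M] (f : (Σ i, Fin (k i)) → M)
    (i : Fin n) : ∏ j, ∏ p ∈ slotSupport d ⟨i, j⟩, f p = ∏ p, f p := by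
  have hrest (j : Fin (k i)) (hj : j ∈ ({d i}ᶜ : Finset _)) : slotSupport d ⟨i, j⟩ = {⟨i, j⟩} :=
    if_neg (by simpa using hj)
  rw [Fintype.prod_eq_mul_prod_compl (d i), show slotSupport d ⟨i, d i⟩ = _ from if_pos rfl,
    ← prod_compl_mul_prod (offSlots d i) f, offSlots, prod_map]
  exact congrArg _ (prod_congr rfl fun j hj => by rw [hrest j hj, prod_singleton]; rfl)

end SlotSupports

theorem exists_injective_prod_solution_of_superincreasing {n : ℕ} {k : Fin n → ℕ}
    (hk : ∀ i, 2 ≤ k i) (c : Fin n → ℤ) {w : Fin n → ℕ+} (hw : ∑ i, c i * ((w i : ℕ) : ℤ) = 0)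
    {W : ℕ+} (hwW : ∀ i, w i ≤ W) {z : ℕ → ℕ+}
    (hz : Superincreasing W z (Fintype.card (Σ i, Fin (k i)))) {A : Set ℕ+}
    (hzA : ∀ S ⊆ range (Fintype.card (Σ i, Fin (k i))), S.Nonempty →
      ∏ s ∈ S, z s ∈ A ∧ ∀ i, w i * ∏ s ∈ S, z s ∈ A) :
    ∃ y : ∀ i, Fin (k i) → ℕ+, (∀ i j, y i j ∈ A) ∧
      Injective (fun q : Σ i, Fin (k i) => y q.1 q.2) ∧
      ∑ i, c i * ∏ j, ((y i j : ℕ) : ℤ) = 0 := by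
  classical
  let d (i : Fin n) : Fin (k i) := ⟨0, by have := hk i; omega⟩
  let slot : (Σ i, Fin (k i)) ↪ ℕ := (Fintype.equivFin _).toEmbedding.trans Fin.valEmbedding
  have hslot (S : Finset (Σ i, Fin (k i))) : S.map slot ⊆ range (Fintype.card _) := fun t ht => by
    obtain ⟨q, -, rfl⟩ := mem_map.mp ht
    exact mem_range.mpr (Fin.is_lt _)
  let coef (q : Σ i, Fin (k i)) : ℕ+ := if q.2 = d q.1 then w q.1 else 1
  have hcoef (q : Σ i, Fin (k i)) : coef q ≤ W := by
    simp only [coef]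
    split_ifs
    exacts [hwW _, one_le]
  let Y (q : Σ i, Fin (k i)) : ℕ+ := coef q * ∏ t ∈ (slotSupport d q).map slot, z t
  have hrow (i : Fin n) : ∏ j, Y ⟨i, j⟩ = w i * ∏ q, z (slot q) := by
    simp only [Y, prod_mul_distrib, prod_map, prod_prod_slotSupport]
    exact congrArg (· * _) (Fintype.prod_ite_eq' (d i) fun _ => w i)
  refine ⟨fun i j => Y ⟨i, j⟩, fun i j => ?_, fun q q' h => ?_, ?_⟩
  · obtain ⟨hzA₁, hzA₂⟩ := hzA _ (hslot _) ⟨_, mem_map_of_mem slot (mem_slotSupport_self _)⟩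
    simp only [Y, coef]
    split_ifs
    exacts [hzA₂ i, by rwa [one_mul]]
  · have hd (i : Fin n) : ∃ j, j ≠ d i :=
      Fintype.exists_ne_of_one_lt_card (by rw [Fintype.card_fin]; exact hk i) (d i)
    exact slotSupport_injective hd (map_injective slot
      (hz.eq_of_mul_prod_eq (hcoef q) (hcoef q') (hslot _) (hslot _) h))
  · have hrowℤ (i : Fin n) : ∏ j, ((Y ⟨i, j⟩ : ℕ) : ℤ) =
        ((w i : ℕ) : ℤ) * ((∏ q, z (slot q) : ℕ+) : ℕ) := by
      rw [← Nat.cast_mul, ← PNat.mul_coe, ← hrow, PNat.coe_prod, Nat.cast_prod]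
    simp only [hrowℤ, ← mul_assoc, ← sum_mul, hw, zero_mul]

theorem exists_injective_prod_solution_mem {n : ℕ} {c : Fin n → ℤ} {u : Ultrafilter ℕ+}
    (hidem : u * u = u) (hu : u ∈ solutionUltrafilters c) (hlarge : ∀ N : ℕ+, {y | N < y} ∈ u)
    {A : Set ℕ+} (hA : A ∈ u) {k : Fin n → ℕ} (hk : ∀ i, 2 ≤ k i) :
    ∃ y : ∀ i, Fin (k i) → ℕ+, (∀ i j, y i j ∈ A) ∧
      Injective (fun q : Σ i, Fin (k i) => y q.1 q.2) ∧
      ∑ i, c i * ∏ j, ((y i j : ℕ) : ℤ) = 0 := by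
  obtain ⟨w, hw, hsum⟩ := hu _ (Ultrafilter.starSet_mem hidem hA) 0
  have hD : A ∩ ⋂ i, {y | w i * y ∈ A} ∈ u :=
    Filter.inter_mem hA (Filter.iInter_mem.mpr fun i => (hw i).1.2)
  obtain ⟨z, hz, hzD⟩ := exists_superincreasing_prod_mem hidem hlarge hD (∏ i, w i)
    (Fintype.card (Σ i, Fin (k i)))
  exact exists_injective_prod_solution_of_superincreasing hk c hsum
    (fun i => single_le_prod' (fun _ _ => one_le) (mem_univ i)) hz
    fun S hS hne => ⟨(hzD S hS hne).1, Set.mem_iInter.mp (hzD S hS hne).2⟩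

theorem pr_products_rado_general {n : ℕ}
    (c : Fin n → ℤ) (hc : ∀ i, c i ≠ 0)
    (J : Finset (Fin n)) (hJ : J.Nonempty) (hsum : ∑ j ∈ J, c j = 0)
    (k : Fin n → ℕ) (hk : ∀ i, 2 ≤ k i) :
    ∀ (r : ℕ) (C : ℕ+ → Fin r), ∃ y : ∀ i, Fin (k i) → ℕ+,
      (∀ i j i' j', C (y i j) = C (y i' j')) ∧
      Function.Injective (fun q : Σ i, Fin (k i) => y q.1 q.2) ∧
      (∑ i, c i * ∏ j, ((y i j : ℕ) : ℤ)) = 0 := by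
  intro r C
  obtain ⟨j₀, hj₀⟩ := hJ
  obtain ⟨u, hu, hidem⟩ := exists_idempotent_mem_solutionUltrafilters c hj₀ (hc j₀) hsum
  obtain ⟨γ, hγ⟩ := (u.map C).eq_pure_of_finite
  have hA : C ⁻¹' {γ} ∈ u := Ultrafilter.mem_map.mp (hγ ▸ Set.mem_singleton γ)
  obtain ⟨y, hyA, hinj, hy⟩ := exists_injective_prod_solution_mem hidem hu
    (setOf_lt_mem_of_mem_solutionUltrafilters j₀.pos hu) hA hk
  exact ⟨y, fun i j i' j' => (hyA i j).trans (hyA i' j').symm, hinj, hy⟩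

/-- Let `n ≥ 3`, let `c₁,…,cₙ` be nonzero integers with `∑_{j∈J} c_j = 0` for
some nonempty `J`, and let `k_i ≥ 2`. Then `∑ᵢ cᵢ ∏ⱼ y_{i,j} = 0` is partition
regular on `ℕ` with all the variables `y_{i,j}` pairwise distinct. -/
theorem pr_products_rado {n : ℕ} (hn : 3 ≤ n)
    (c : Fin n → ℤ) (hc : ∀ i, c i ≠ 0)
    (J : Finset (Fin n)) (hJ : J.Nonempty) (hsum : ∑ j ∈ J, c j = 0)
    (k : Fin n → ℕ) (hk : ∀ i, 2 ≤ k i) :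
    ∀ (r : ℕ) (C : ℕ+ → Fin r), ∃ y : ∀ i, Fin (k i) → ℕ+,
      (∀ i j i' j', C (y i j) = C (y i' j')) ∧
      Function.Injective (fun q : Σ i, Fin (k i) => y q.1 q.2) ∧
      (∑ i, c i * ∏ j, ((y i j : ℕ) : ℤ)) = 0 :=
  pr_products_rado_general c hc J hJ hsum k hk
end

section
/- The equation x·(y₁ + y₂) = z² is partition regular on ℕ with full injectivity: for every finite partition of ℕ there exist monochromatic, pairwise distinct natural numbers x, y₁, y₂, z with x·(y₁ + y₂) = z². -/
/-!
Take an idempotent ultrafilter `U` on `ℕ+` and colour each exponent `i` by the colour that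
`t ↦ C (2 ^ i * t)` takes on a `U`-large set. Gallai's theorem gives a progression `k, k + d, k + 2d`
of exponents of one colour `c`, and Hindman's theorem a sequence whose finite sums `t` all satisfy
`C (2 ^ i * t) = c` for these three `i`. Among the finite sums pick `n₁` and a much larger `n₂`
with `n₁ + n₂` again a finite sum; then `x = 2 ^ k (n₁ + n₂)`, `yᵢ = 2 ^ (k + 2d) nᵢ` and
`z = 2 ^ (k + d) (n₁ + n₂)` work, since `x (y₁ + y₂) = 2 ^ (2k + 2d) (n₁ + n₂) ^ 2 = z ^ 2`.
-/

open Hindman Filter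

attribute [local instance] Ultrafilter.addSemigroup

theorem exists_FS_mono_homothetic_copy {N M κ : Type*} [AddCommMonoid N] [AddSemigroup M]
    [Nonempty M] [Finite κ] (S : Finset N) (f : N → M → κ) :
    ∃ a > 0, ∃ (b : N) (c : κ) (s : Stream' M), ∀ i ∈ S, ∀ t ∈ FS s, f (a • i + b) t = c := by
  obtain ⟨U, hU⟩ :=
    exists_idempotent_of_compact_t2_of_continuous_add_left (@Ultrafilter.continuous_add_left M _)
  have : ∀ i, ∃ c, ∀ᶠ t in U, f i t = c := fun i =>
    Ultrafilter.eventually_exists_iff.1 (.of_forall fun t => ⟨f i t, rfl⟩)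
  choose col hcol using this
  obtain ⟨a, ha, b, c, hc⟩ := Combinatorics.exists_mono_homothetic_copy S col
  have hmem : {t | ∀ i ∈ S, f (a • i + b) t = c} ∈ U :=
    (eventually_all_finset S).2 fun i hi => hc i hi ▸ hcol _
  obtain ⟨s, hs⟩ := exists_FS_of_large U hU _ hmem
  exact ⟨a, ha, b, c, s, fun i hi t ht => hs ht i hi⟩

theorem Hindman.not_bddAbove_FS_pnat (a : Stream' ℕ+) : ¬ BddAbove (FS a) := by
  suffices h : ∀ (n : ℕ) (a : Stream' ℕ+), ∃ y ∈ FS a, n < (y : ℕ) by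
    rw [not_bddAbove_iff]
    exact fun B => h B a
  intro n
  induction n with
  | zero => exact fun a => ⟨a.head, FS.head a, a.head.pos⟩
  | succ n ih =>
    intro a
    obtain ⟨y, hy, hn⟩ := ih a.tail
    refine ⟨a.head + y, FS.cons a y hy, ?_⟩
    rw [PNat.add_coe]
    have := a.head.pos
    omega

theorem pow_mul_sum_mul_eq_sq (q n₁ n₂ : ℕ+) (i j l : ℕ) (h : i + j = 2 * l) :
    q ^ i * (n₁ + n₂) * (q ^ j * n₁ + q ^ j * n₂) = (q ^ l * (n₁ + n₂)) ^ 2 := by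
  have hq : (q : ℕ) ^ i * q ^ j = q ^ l * q ^ l := by rw [← pow_add, ← pow_add, h, two_mul]
  apply PNat.eq
  push_cast
  calc _ = ((q : ℕ) ^ i * q ^ j) * (n₁ + n₂ : ℕ) ^ 2 := by ring
    _ = _ := by rw [hq]; ring

theorem pow_mul_lt_chain (q n₁ n₂ : ℕ+) (k d : ℕ) (hq : 2 ≤ q) (hd : 0 < d)
    (h : q ^ (2 * d) * n₁ < n₂) :
    q ^ (k + 2 * d) * n₁ < q ^ k * (n₁ + n₂) ∧ q ^ k * (n₁ + n₂) < q ^ (k + d) * (n₁ + n₂) ∧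
      q ^ (k + d) * (n₁ + n₂) < q ^ (k + 2 * d) * n₂ := by
  simp only [← PNat.coe_lt_coe, ← PNat.coe_le_coe, PNat.mul_coe, PNat.pow_coe,
    PNat.add_coe] at hq h ⊢
  rw [pow_mul'] at h
  rw [pow_add, pow_add, pow_mul', mul_assoc, mul_assoc, mul_assoc]
  have hQ : 2 ≤ (q : ℕ) ^ d := hq.trans (Nat.le_self_pow hd.ne' _)
  have hP : 0 < (q : ℕ) ^ k := by positivity
  set Q := (q : ℕ) ^ d
  have h₁₂ : (n₁ : ℕ) < n₂ := (Nat.le_mul_of_pos_left _ (by positivity)).trans_lt h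
  refine ⟨?_, ?_, ?_⟩ <;> apply Nat.mul_lt_mul_of_pos_left _ hP
  · omega
  · nlinarith
  · rw [sq, mul_assoc]
    apply Nat.mul_lt_mul_of_pos_left _ (by omega)
    nlinarith

/-- The equation `x·(y₁ + y₂) = z²` is partition regular on `ℕ` with full
injectivity: every finite coloring admits monochromatic pairwise distinct
`x, y₁, y₂, z` with `x·(y₁ + y₂) = z²`. -/
theorem pr_x_mul_sum_eq_square :
    ∀ (r : ℕ) (C : ℕ+ → Fin r), ∃ x y₁ y₂ z : ℕ+,
      C x = C y₁ ∧ C x = C y₂ ∧ C x = C z ∧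
      x ≠ y₁ ∧ x ≠ y₂ ∧ x ≠ z ∧ y₁ ≠ y₂ ∧ y₁ ≠ z ∧ y₂ ≠ z ∧
      x * (y₁ + y₂) = z ^ 2 := by
  intro r C
  obtain ⟨d, hd, k, c, a, hmono⟩ :=
    exists_FS_mono_homothetic_copy {0, 1, 2} fun i (t : ℕ+) => C (2 ^ i * t)
  have hcol : ∀ i ≤ 2, ∀ t ∈ FS a, C (2 ^ (k + i * d) * t) = c := fun i hi t ht => by
    simpa [add_comm k, mul_comm i] using hmono i (by simp; omega) t ht
  set n₁ := a.head
  obtain ⟨n₂, hn₂, hbig⟩ := not_bddAbove_iff.1 (not_bddAbove_FS_pnat a.tail) (2 ^ (2 * d) * n₁)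
  have hm : n₁ + n₂ ∈ FS a := FS.cons a n₂ hn₂
  have hx : C (2 ^ k * (n₁ + n₂)) = c := by simpa using hcol 0 (by omega) _ hm
  have hz : C (2 ^ (k + d) * (n₁ + n₂)) = c := by simpa using hcol 1 (by omega) _ hm
  have hy₁ := hcol 2 le_rfl _ (FS.head a)
  have hy₂ := hcol 2 le_rfl _ (FS.tail a n₂ hn₂)
  obtain ⟨hy₁x, hxz, hzy₂⟩ := pow_mul_lt_chain 2 n₁ n₂ k d le_rfl hd hbig
  exact ⟨_, _, _, _, hx.trans hy₁.symm, hx.trans hy₂.symm, hx.trans hz.symm,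
    hy₁x.ne', (hxz.trans hzy₂).ne, hxz.ne, (hy₁x.trans (hxz.trans hzy₂)).ne,
    (hy₁x.trans hxz).ne, hzy₂.ne', pow_mul_sum_mul_eq_sq _ _ _ _ _ _ (by omega)⟩
end

section
/- Let P(x) = ∑_α c_α x^α ∈ ℤ[x₁,…,xₙ] be a polynomial with no constant term (the sum over multi-indexes α ∈ supp(P)). Suppose there exists a prime p such that: (1) the congruence ∑_{α∈supp(P)} c_α z^{|α|} ≡ 0 (mod p) has no solution z ≢ 0 (mod p); and (2) for every Rado set J of minimal indexes of P, the congruence ∑_{α∈J} c_α z^{|α|} ≡ 0 (mod p) has no solution z ≢ 0 (mod p). Then P is not partition regular on ℕ except possibly for constant solutions: there exists a finite partition of ℕ such that every monochromatic tuple (a₁,…,aₙ) with P(a₁,…,aₙ) = 0 satisfies a₁ = … = aₙ. -/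
/-!
Colour `a = p ^ v * b` (with `p ∤ b`) by the pair (`b mod p`, `L`-free part of `v` mod `L`), where
`L` is a prime larger than the total degree of `P`. In a monochromatic solution all `bᵢ ≡ z` and
the L-free parts of the `vᵢ` are all `≡ c (mod L)`. Dividing `P(a)` by the least power `p ^ m` of
`p` among its terms and reducing mod `p` leaves `∑ c_α z^|α|` over the indexes of least weight
`∑ αᵢ vᵢ`. If `c = 0` every `vᵢ` vanishes and this is the sum of (1). Otherwise every `vᵢ > 0`, so
the indexes of least weight are minimal; reducing their (equal) weights divided by `L ^ k`, with
`k` the least `L`-adic valuation of the `vᵢ`, gives `c ∑_{i∈Λ} αᵢ ≡ c ∑_{i∈Λ} βᵢ (mod L)` on the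
set `Λ` where that valuation is attained, and `|α|, |β| < L` turns this into equality: the indexes
of least weight form a Rado set, against (2). So there is no monochromatic solution at all.
-/

/- `ℕ+` plays the role of the paper's `ℕ` (the positive integers).
Multi-indexes of `P ∈ ℤ[x₁,…,xₙ]` are elements of `Fin n →₀ ℕ`. -/

/-- The length `|α| = ∑ᵢ αᵢ` of a multi-index. -/
def mdeg {n : ℕ} (α : Fin n →₀ ℕ) : ℕ := ∑ i, α i

def IsMinimalIndex {n : ℕ} (P : MvPolynomial (Fin n) ℤ) (α : Fin n →₀ ℕ) : Prop :=
  α ∈ P.support ∧ ¬∃ β ∈ P.support, β < α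

def IsRadoSet {n : ℕ} (P : MvPolynomial (Fin n) ℤ) (J : Finset (Fin n →₀ ℕ)) : Prop :=
  J.Nonempty ∧ J ⊆ P.support ∧
    ∀ α ∈ J, ∀ β ∈ J, ∃ Λ : Finset (Fin n), Λ.Nonempty ∧
      ∑ i ∈ Λ, α i = ∑ i ∈ Λ, β i

open Finset Finsupp MvPolynomial

theorem Nat.natCast_ordCompl_eq_zero_iff {L v : ℕ} (hL : L.Prime) :
    ((ordCompl[L] v : ℕ) : ZMod L) = 0 ↔ v = 0 := by
  rw [ZMod.natCast_eq_zero_iff]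
  refine ⟨fun h => by_contra fun hv => Nat.not_dvd_ordCompl hL hv h, ?_⟩
  rintro rfl
  simp

section
variable {σ : Type*} [Fintype σ]

theorem Finsupp.weight_lt_weight {v : σ → ℕ} (hv : ∀ i, v i ≠ 0) {α β : σ →₀ ℕ} (h : β < α) :
    weight v β < weight v α := by
  obtain ⟨γ, rfl⟩ := exists_add_of_le h.le
  obtain ⟨i, hi⟩ : ∃ i, γ i ≠ 0 := by
    by_contra! hγ
    exact h.ne (by simp [DFunLike.ext γ 0 hγ])
  rw [map_add]
  have := le_weight v (hv i) γ
  omega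

theorem MvPolynomial.sum_coeff_mul_pow_degree_eq_zero_of_eval_eq_zero {p : ℕ} (hp : p ≠ 0)
    {P : MvPolynomial σ ℤ} {v : σ → ℕ} {b : σ → ℤ} {z : ZMod p} (hb : ∀ i, (b i : ZMod p) = z)
    {m : ℕ} (hm : ∀ α ∈ P.support, m ≤ weight v α)
    (hP : eval (fun i => (p : ℤ) ^ v i * b i) P = 0) :
    ∑ α ∈ P.support with weight v α = m, ((P.coeff α : ℤ) : ZMod p) * z ^ degree α = 0 := by
  have hsplit : ∀ α ∈ P.support, P.coeff α * ∏ i, ((p : ℤ) ^ v i * b i) ^ α i =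
      (p : ℤ) ^ m * (P.coeff α * (p : ℤ) ^ (weight v α - m) * ∏ i, b i ^ α i) := by
    intro α hα
    have hpow : ∏ i, ((p : ℤ) ^ v i) ^ α i = (p : ℤ) ^ m * (p : ℤ) ^ (weight v α - m) := by
      rw [← pow_add, Nat.add_sub_cancel' (hm α hα), weight_eq_sum, ← prod_pow_eq_pow_sum]
      simp_rw [smul_eq_mul, ← pow_mul, mul_comm]
    rw [mul_comm (P.coeff α), ← mul_assoc, mul_comm (P.coeff α), ← mul_assoc, ← hpow]
    simp_rw [mul_pow, prod_mul_distrib]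
    ring
  have hZ : ∑ α ∈ P.support, P.coeff α * (p : ℤ) ^ (weight v α - m) * ∏ i, b i ^ α i = 0 := by
    rw [eval_eq', sum_congr rfl hsplit, ← Finset.mul_sum] at hP
    exact (mul_eq_zero.mp hP).resolve_left (pow_ne_zero _ (by exact_mod_cast hp))
  have hZp := congrArg (Int.cast : ℤ → ZMod p) hZ
  push_cast at hZp
  rw [sum_filter]
  refine (sum_congr rfl fun α hα => ?_).trans hZp
  split_ifs with h
  · simp [h, hb, prod_pow_eq_pow_sum, degree_eq_sum]
  · have : weight v α - m ≠ 0 := by have := hm α hα; omega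
    simp [zero_pow this]

theorem Finsupp.exists_weight_eq_pow_mul {L : ℕ} [Nonempty σ] {v : σ → ℕ}
    {c : ZMod L} (hv : ∀ i, ((ordCompl[L] (v i) : ℕ) : ZMod L) = c) :
    ∃ (k : ℕ) (Λ : Finset σ), Λ.Nonempty ∧ ∀ γ : σ →₀ ℕ,
      ∃ q : ℕ, weight v γ = L ^ k * q ∧ (q : ZMod L) = c * ∑ i ∈ Λ, (γ i : ZMod L) := by
  classical
  set ν : σ → ℕ := fun i => (v i).factorization L
  obtain ⟨i₀, -, hi₀⟩ := exists_min_image univ ν univ_nonempty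
  refine ⟨ν i₀, univ.filter (ν · = ν i₀), ⟨i₀, by simp⟩, fun γ => ?_⟩
  have hdvd : ∀ i, L ^ ν i₀ ∣ v i :=
    fun i => (pow_dvd_pow L (hi₀ i (mem_univ i))).trans (Nat.ordProj_dvd (v i) L)
  have hres : ∀ i, ((v i / L ^ ν i₀ : ℕ) : ZMod L) = if ν i = ν i₀ then c else 0 := by
    intro i
    split_ifs with hi
    · rw [← hi, ← hv i]
    · rw [ZMod.natCast_eq_zero_iff, Nat.dvd_div_iff_mul_dvd (hdvd i), ← pow_succ]
      exact (pow_dvd_pow L (lt_of_le_of_ne (hi₀ i (mem_univ i)) (Ne.symm hi))).trans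
        (Nat.ordProj_dvd (v i) L)
  refine ⟨∑ i, γ i * (v i / L ^ ν i₀), ?_, ?_⟩
  · rw [weight_eq_sum, Finset.mul_sum]
    refine Finset.sum_congr rfl fun i _ => ?_
    rw [smul_eq_mul, mul_left_comm, Nat.mul_div_cancel' (hdvd i)]
  · push_cast
    simp_rw [hres, mul_ite, mul_zero, ← sum_filter, Finset.mul_sum, mul_comm c]

theorem Finsupp.exists_sum_eq_of_weight_eq {L : ℕ} (hL : L.Prime) [Nonempty σ] {v : σ → ℕ}
    {c : ZMod L} (hc : c ≠ 0) (hv : ∀ i, ((ordCompl[L] (v i) : ℕ) : ZMod L) = c) :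
    ∃ Λ : Finset σ, Λ.Nonempty ∧ ∀ α β : σ →₀ ℕ, degree α < L → degree β < L →
      weight v α = weight v β → ∑ i ∈ Λ, α i = ∑ i ∈ Λ, β i := by
  have := Fact.mk hL
  obtain ⟨k, Λ, hΛ, hq⟩ := exists_weight_eq_pow_mul hv
  refine ⟨Λ, hΛ, fun α β hα hβ hαβ => ?_⟩
  obtain ⟨qα, hwα, hqα⟩ := hq α
  obtain ⟨qβ, hwβ, hqβ⟩ := hq β
  have hsum_lt : ∀ γ : σ →₀ ℕ, degree γ < L → ∑ i ∈ Λ, γ i < L := fun γ hγ =>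
    ((sum_le_sum_of_subset (subset_univ Λ)).trans (degree_eq_sum γ).ge).trans_lt hγ
  have hmod : ((∑ i ∈ Λ, α i : ℕ) : ZMod L) = ((∑ i ∈ Λ, β i : ℕ) : ZMod L) := by
    have hqeq : qα = qβ :=
      Nat.eq_of_mul_eq_mul_left (pow_pos hL.pos k) (hwα ▸ hwβ ▸ hαβ)
    push_cast
    exact mul_left_cancel₀ hc (hqα ▸ hqβ ▸ congrArg _ hqeq)
  rw [ZMod.natCast_eq_natCast_iff', Nat.mod_eq_of_lt (hsum_lt α hα),
    Nat.mod_eq_of_lt (hsum_lt β hβ)] at hmod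
  exact hmod

end

theorem mdeg_eq_degree {n : ℕ} (α : Fin n →₀ ℕ) : mdeg α = degree α :=
  (degree_eq_sum α).symm

theorem isMinimalIndex_of_forall_weight_le {n : ℕ} {P : MvPolynomial (Fin n) ℤ} {v : Fin n → ℕ}
    (hv : ∀ i, v i ≠ 0) {α : Fin n →₀ ℕ} (hα : α ∈ P.support)
    (hmin : ∀ β ∈ P.support, weight v α ≤ weight v β) : IsMinimalIndex P α :=
  ⟨hα, fun ⟨β, hβ, hlt⟩ => (hmin β hβ).not_gt (weight_lt_weight hv hlt)⟩

def residueColor (p L a : ℕ) : ZMod p × ZMod L :=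
  ((ordCompl[p] a : ℕ), (ordCompl[L] (a.factorization p) : ℕ))

theorem eval_ne_zero_of_residueColor_eq {n : ℕ} {P : MvPolynomial (Fin n) ℤ} {p L : ℕ}
    (hp : p.Prime) (hL : L.Prime) (hPL : P.totalDegree < L)
    (h1 : ∀ z : ZMod p, z ≠ 0 →
      ∑ α ∈ P.support, (((P.coeff α : ℤ) : ZMod p) * z ^ mdeg α) ≠ 0)
    (h2 : ∀ J : Finset (Fin n →₀ ℕ), IsRadoSet P J →
      (∀ α ∈ J, IsMinimalIndex P α) →
      ∀ z : ZMod p, z ≠ 0 →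
        ∑ α ∈ J, (((P.coeff α : ℤ) : ZMod p) * z ^ mdeg α) ≠ 0)
    {a : Fin n → ℕ} (ha : ∀ i, a i ≠ 0) (i₀ : Fin n)
    (hcol : ∀ i, residueColor p L (a i) = residueColor p L (a i₀)) :
    eval (fun i => (a i : ℤ)) P ≠ 0 := by
  intro heval
  have : Nonempty (Fin n) := ⟨i₀⟩
  set v : Fin n → ℕ := fun i => (a i).factorization p
  set z : ZMod p := ((ordCompl[p] (a i₀) : ℕ) : ZMod p)
  set c : ZMod L := ((ordCompl[L] (v i₀) : ℕ) : ZMod L)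
  have hz : z ≠ 0 := (Nat.natCast_ordCompl_eq_zero_iff hp).not.mpr (ha i₀)
  have hv : ∀ i, ((ordCompl[L] (v i) : ℕ) : ZMod L) = c := fun i => congrArg Prod.snd (hcol i)
  have hsupp : P.support.Nonempty :=
    nonempty_iff_ne_empty.mpr fun h => h1 z hz (by simp [h])
  obtain ⟨α₀, hα₀, hmin⟩ := P.support.exists_min_image (weight v) hsupp
  have hM : ∑ α ∈ P.support with weight v α = weight v α₀,
      ((P.coeff α : ℤ) : ZMod p) * z ^ mdeg α = 0 := by
    simp_rw [mdeg_eq_degree]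
    refine sum_coeff_mul_pow_degree_eq_zero_of_eval_eq_zero hp.ne_zero
      (b := fun i => (ordCompl[p] (a i) : ℕ))
      (fun i => (Int.cast_natCast _).trans (congrArg Prod.fst (hcol i))) hmin ?_
    convert heval using 4 with i
    exact_mod_cast Nat.ordProj_mul_ordCompl_eq_self (a i) p
  by_cases hc : c = 0
  · have hv0 : v = 0 :=
      funext fun i => (Nat.natCast_ordCompl_eq_zero_iff hL).mp ((hv i).trans hc)
    exact h1 z hz (by simpa [hv0, weight_eq_sum] using hM)
  · have hv0 : ∀ i, v i ≠ 0 := fun i h =>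
      hc ((hv i).symm.trans ((Nat.natCast_ordCompl_eq_zero_iff hL).mpr h))
    obtain ⟨Λ, hΛ, hsum⟩ := exists_sum_eq_of_weight_eq hL hc hv
    refine h2 _ ⟨⟨α₀, by simp [hα₀]⟩, filter_subset _ _, fun α hα β hβ => ⟨Λ, hΛ, ?_⟩⟩
      (fun α hα => ?_) z hz hM
    · simp only [mem_filter] at hα hβ
      exact hsum α β ((le_totalDegree hα.1).trans_lt hPL) ((le_totalDegree hβ.1).trans_lt hPL)
        (hα.2.trans hβ.2.symm)
    · simp only [mem_filter] at hα
      exact isMinimalIndex_of_forall_weight_le hv0 hα.1 (hα.2 ▸ hmin)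

theorem not_pr_of_mod_p_conditions_general {n : ℕ} (P : MvPolynomial (Fin n) ℤ)
    (p : ℕ) (hp : p.Prime)
    (h1 : ∀ z : ZMod p, z ≠ 0 →
      ∑ α ∈ P.support, (((P.coeff α : ℤ) : ZMod p) * z ^ mdeg α) ≠ 0)
    (h2 : ∀ J : Finset (Fin n →₀ ℕ), IsRadoSet P J →
      (∀ α ∈ J, IsMinimalIndex P α) →
      ∀ z : ZMod p, z ≠ 0 →
        ∑ α ∈ J, (((P.coeff α : ℤ) : ZMod p) * z ^ mdeg α) ≠ 0) :
    ∃ (r : ℕ) (C : ℕ+ → Fin r), ∀ a : Fin n → ℕ+,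
      (∀ i j, C (a i) = C (a j)) →
      MvPolynomial.eval (fun i => ((a i : ℕ) : ℤ)) P = 0 →
      ∀ i j, a i = a j := by
  obtain ⟨L, hPL, hL⟩ := Nat.exists_infinite_primes (P.totalDegree + 1)
  have : NeZero p := ⟨hp.ne_zero⟩
  have : NeZero L := ⟨hL.ne_zero⟩
  refine ⟨_, fun a => Fintype.equivFin _ (residueColor p L a), fun a hmono heval i₀ => ?_⟩
  exact absurd heval (eval_ne_zero_of_residueColor_eq hp hL hPL h1 h2 (fun i => (a i).ne_zero) i₀
    fun i => (Fintype.equivFin _).injective (hmono i i₀))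

/-- Suppose `P` has no constant term and for some prime `p`:
(1) `∑_{α ∈ supp P} c_α z^{|α|} ≡ 0 (mod p)` has no solution `z ≢ 0`, and
(2) for every Rado set `J` of minimal indexes, `∑_{α∈J} c_α z^{|α|} ≡ 0 (mod p)`
has no solution `z ≢ 0`. Then `P` is not partition regular on `ℕ` except
possibly for constant solutions. -/
theorem not_pr_of_mod_p_conditions {n : ℕ} (P : MvPolynomial (Fin n) ℤ)
    (hP0 : MvPolynomial.constantCoeff P = 0)
    (p : ℕ) (hp : p.Prime)
    (h1 : ∀ z : ZMod p, z ≠ 0 →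
      ∑ α ∈ P.support, (((P.coeff α : ℤ) : ZMod p) * z ^ mdeg α) ≠ 0)
    (h2 : ∀ J : Finset (Fin n →₀ ℕ), IsRadoSet P J →
      (∀ α ∈ J, IsMinimalIndex P α) →
      ∀ z : ZMod p, z ≠ 0 →
        ∑ α ∈ J, (((P.coeff α : ℤ) : ZMod p) * z ^ mdeg α) ≠ 0) :
    ∃ (r : ℕ) (C : ℕ+ → Fin r), ∀ a : Fin n → ℕ+,
      (∀ i j, C (a i) = C (a j)) →
      MvPolynomial.eval (fun i => ((a i : ℕ) : ℤ)) P = 0 →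
      ∀ i j, a i = a j :=
  not_pr_of_mod_p_conditions_general P p hp h1 h2
end

section
/- Let P(x) = ∑_α c_α x^α ∈ ℤ[x₁,…,xₙ] be a nonzero homogeneous polynomial (all multi-indexes α ∈ supp(P) have the same length |α|). If ∑_{α∈Γ} c_α ≠ 0 for every nonempty subset Γ ⊆ supp(P), then P is not partition regular on ℕ: there exists a finite partition of ℕ such that no monochromatic tuple (a₁,…,aₙ) satisfies P(a₁,…,aₙ) = 0. -/
/-!
Colour a positive integer `a` by its leading digits in base `b = 2K + 2` at precision `1 / N`,
that is by `⌊N a / b ^ k⌋` where `b ^ k ≤ a < b ^ (k + 1)` and `K = ∑ |c_α|`. The entries of a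
monochromatic tuple are then `a_i = λ b ^ (k_i) σ_i` with a common `λ > 0` and
`σ_i ∈ [1, 1 + 1/N]`, so by homogeneity `P(a) = λ ^ d ∑ c_α b ^ (e α) y_α` with
`e α = ∑ k_i α_i` and `y_α ∈ [1, (1 + 1/N) ^ d]`. The monomials of maximal weight `E` have
coefficients summing to a nonzero integer, so for `N` large they contribute at least `b ^ E / 2`
in absolute value, while all the others together contribute at most `b ^ (E - 1) (K + 1/2)`,
which is less because `b > 2K + 1`.
-/

open Finset Filter Topology

variable {ι : Type*}

section Estimates

variable (s : Finset ι) (c : ι → ℤ)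

lemma abs_sum_intCast_mul_le {z : ι → ℝ} {M : ℝ} (hz : ∀ i ∈ s, |z i| ≤ M) :
    |∑ i ∈ s, (c i : ℝ) * z i| ≤ (∑ i ∈ s, (c i).natAbs : ℕ) * M := by
  calc |∑ i ∈ s, (c i : ℝ) * z i| ≤ ∑ i ∈ s, |(c i : ℝ)| * M :=
        (abs_sum_le_sum_abs _ _).trans <| sum_le_sum fun i hi => by
          rw [abs_mul]; exact mul_le_mul_of_nonneg_left (hz i hi) (abs_nonneg _)
    _ = (∑ i ∈ s, (c i).natAbs : ℕ) * M := by
      rw [← sum_mul]; push_cast [Nat.cast_natAbs, Int.cast_abs]; rfl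

lemma one_half_le_abs_sum_intCast_mul (hc : ∑ i ∈ s, c i ≠ 0) {y : ι → ℝ} {ε : ℝ}
    (hy : ∀ i ∈ s, y i ∈ Set.Icc 1 (1 + ε))
    (hε : (∑ i ∈ s, (c i).natAbs : ℕ) * ε ≤ 1 / 2) :
    1 / 2 ≤ |∑ i ∈ s, (c i : ℝ) * y i| := by
  have hsum : (1 : ℝ) ≤ |∑ i ∈ s, (c i : ℝ)| := by exact_mod_cast Int.one_le_abs hc
  have hdev : |∑ i ∈ s, (c i : ℝ) * (y i - 1)| ≤ (∑ i ∈ s, (c i).natAbs : ℕ) * ε :=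
    abs_sum_intCast_mul_le s c fun i hi => by
      obtain ⟨h1, h2⟩ := hy i hi
      rw [abs_le]; constructor <;> linarith
  have hsplit : ∑ i ∈ s, (c i : ℝ) * y i =
      ∑ i ∈ s, (c i : ℝ) - -∑ i ∈ s, (c i : ℝ) * (y i - 1) := by
    rw [sub_neg_eq_add, ← sum_add_distrib]
    exact sum_congr rfl fun i _ => by ring
  have := abs_sub_abs_le_abs_sub (∑ i ∈ s, (c i : ℝ)) (-∑ i ∈ s, (c i : ℝ) * (y i - 1))
  rw [abs_neg, ← hsplit] at this
  linarith

lemma abs_sum_intCast_mul_pow_mul_le {e : ι → ℕ} {b E : ℕ} (hb : 0 < b)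
    (he : ∀ i ∈ s, e i < E) {y : ι → ℝ} {ε : ℝ} (hy : ∀ i ∈ s, y i ∈ Set.Icc 0 (1 + ε)) :
    |∑ i ∈ s, (c i : ℝ) * ((b : ℝ) ^ e i * y i)| ≤
      (∑ i ∈ s, (c i).natAbs : ℕ) * ((b : ℝ) ^ E / b * (1 + ε)) := by
  have hb0 : (0 : ℝ) < b := by exact_mod_cast hb
  refine abs_sum_intCast_mul_le s c fun i hi => ?_
  have hpow : (b : ℝ) ^ e i ≤ (b : ℝ) ^ E / b := by
    rw [le_div_iff₀ hb0, ← pow_succ]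
    exact pow_le_pow_right₀ (by exact_mod_cast hb) (he i hi)
  obtain ⟨hy0, hy1⟩ := hy i hi
  rw [abs_of_nonneg (by positivity)]
  exact mul_le_mul hpow hy1 hy0 (by positivity)

theorem sum_intCast_mul_pow_mul_ne_zero (hs : s.Nonempty)
    (hc : ∀ Γ ⊆ s, Γ.Nonempty → ∑ i ∈ Γ, c i ≠ 0) (e : ι → ℕ) {b : ℕ}
    (hb : 2 * ∑ i ∈ s, (c i).natAbs + 1 < b) {y : ι → ℝ} {ε : ℝ}
    (hy : ∀ i ∈ s, y i ∈ Set.Icc 1 (1 + ε))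
    (hε : (∑ i ∈ s, (c i).natAbs : ℕ) * ε ≤ 1 / 2) :
    ∑ i ∈ s, (c i : ℝ) * ((b : ℝ) ^ e i * y i) ≠ 0 := by
  set K := ∑ i ∈ s, (c i).natAbs
  set E := s.sup e
  obtain ⟨i₀, hi₀, hi₀E⟩ := exists_mem_eq_sup s hs e
  have hε0 : 0 ≤ ε := by linarith [(hy i₀ hi₀).1, (hy i₀ hi₀).2]
  have hb0 : (0 : ℝ) < b := by exact_mod_cast (show 0 < b by omega)
  have htop : 1 / 2 ≤ |∑ i ∈ {i ∈ s | e i = E}, (c i : ℝ) * y i| := by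
    refine one_half_le_abs_sum_intCast_mul _ c
      (hc _ (filter_subset _ _) ⟨i₀, mem_filter.2 ⟨hi₀, hi₀E.symm⟩⟩)
      (fun i hi => hy i (mem_of_mem_filter i hi)) (le_trans ?_ hε)
    gcongr
    exact sum_le_sum_of_subset (filter_subset _ _)
  have hlow : |∑ i ∈ {i ∈ s | e i ≠ E}, (c i : ℝ) * ((b : ℝ) ^ e i * y i)| ≤
      K * ((b : ℝ) ^ E / b * (1 + ε)) := by
    refine (abs_sum_intCast_mul_pow_mul_le _ c (E := E) (ε := ε) (by omega) (fun i hi => ?_)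
      fun i hi => ?_).trans ?_
    · exact lt_of_le_of_ne (le_sup (mem_filter.1 hi).1) (mem_filter.1 hi).2
    · exact Set.Icc_subset_Icc_left zero_le_one (hy i (mem_of_mem_filter i hi))
    · gcongr
      exact sum_le_sum_of_subset (filter_subset _ _)
  intro hzero
  have hsplit : (b : ℝ) ^ E * ∑ i ∈ {i ∈ s | e i = E}, (c i : ℝ) * y i +
      ∑ i ∈ {i ∈ s | e i ≠ E}, (c i : ℝ) * ((b : ℝ) ^ e i * y i) = 0 := by
    rw [← hzero, ← sum_filter_add_sum_filter_not s (e · = E), mul_sum]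
    congr 1
    exact sum_congr rfl fun i hi => by rw [(mem_filter.1 hi).2]; ring
  set X : ℝ := (b : ℝ) ^ E / b
  have hbE : (b : ℝ) ^ E = X * b := (div_mul_cancel₀ _ hb0.ne').symm
  have hbK : 2 * (K : ℝ) + 1 < b := by exact_mod_cast hb
  have hcmp : X * b / 2 ≤ K * (X * (1 + ε)) := by
    calc X * b / 2 ≤ (b : ℝ) ^ E * |∑ i ∈ {i ∈ s | e i = E}, (c i : ℝ) * y i| := by
          rw [hbE]; nlinarith [mul_le_mul_of_nonneg_left htop (by positivity : 0 ≤ X * b)]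
      _ = |∑ i ∈ {i ∈ s | e i ≠ E}, (c i : ℝ) * ((b : ℝ) ^ e i * y i)| := by
          rw [← abs_of_pos (pow_pos hb0 E), ← abs_mul, eq_neg_of_add_eq_zero_left hsplit, abs_neg]
      _ ≤ K * (X * (1 + ε)) := hlow
  nlinarith [show 0 < X by positivity]

end Estimates

lemma prod_mul_pow_mul_pow_eq {M : Type*} [CommMonoid M] (t : Finset ι) (l b : M)
    (k α : ι → ℕ) (σ : ι → M) :
    ∏ i ∈ t, (l * b ^ k i * σ i) ^ α i =
      l ^ (∑ i ∈ t, α i) * b ^ (∑ i ∈ t, k i * α i) * ∏ i ∈ t, σ i ^ α i := by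
  simp only [mul_pow, prod_mul_distrib, prod_pow_eq_pow_sum, ← pow_mul]

lemma intCast_eval_eq_pow_mul_sum [Fintype ι] (P : MvPolynomial ι ℤ) {d : ℕ}
    (hhom : ∀ α ∈ P.support, ∑ i, α i = d) {x : ι → ℤ} {l b : ℝ} {k : ι → ℕ} {σ : ι → ℝ}
    (hx : ∀ i, (x i : ℝ) = l * b ^ k i * σ i) :
    (MvPolynomial.eval x P : ℝ) = l ^ d *
      ∑ α ∈ P.support, ((P.coeff α : ℤ) : ℝ) * (b ^ (∑ i, k i * α i) * ∏ i, σ i ^ α i) := by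
  rw [MvPolynomial.eval_eq', mul_sum]
  push_cast
  refine sum_congr rfl fun α hα => ?_
  simp_rw [hx, prod_mul_pow_mul_pow_eq, hhom α hα]
  ring

lemma prod_pow_mem_Icc (t : Finset ι) {σ : ι → ℝ} {δ : ℝ}
    (hσ : ∀ i ∈ t, σ i ∈ Set.Icc 1 (1 + δ)) (α : ι → ℕ) :
    ∏ i ∈ t, σ i ^ α i ∈ Set.Icc 1 ((1 + δ) ^ ∑ i ∈ t, α i) := by
  refine ⟨one_le_prod fun i hi => one_le_pow₀ (hσ i hi).1, ?_⟩
  rw [← prod_pow_eq_pow_sum]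
  exact prod_le_prod (fun i hi => by linarith [one_le_pow₀ (n := α i) (hσ i hi).1])
    fun i hi => pow_le_pow_left₀ (by linarith [(hσ i hi).1]) (hσ i hi).2 _

lemma exists_one_add_inv_pow_le (d : ℕ) {ε : ℝ} (hε : 0 < ε) :
    ∃ N : ℕ, 0 < N ∧ (1 + 1 / (N : ℝ)) ^ d ≤ 1 + ε := by
  have hlim : Tendsto (fun N : ℕ => (1 + 1 / (N : ℝ)) ^ d) atTop (𝓝 1) := by
    simpa using ((tendsto_one_div_atTop_nhds_zero_nat (𝕜 := ℝ)).const_add 1).pow d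
  obtain ⟨N, hN, hNpos⟩ :=
    ((hlim.eventually (ge_mem_nhds (show (1 : ℝ) < 1 + ε by linarith))).and
      (eventually_gt_atTop 0)).exists
  exact ⟨N, hNpos, hN⟩

lemma cast_div_natDiv_mul_mem_Icc {m q N : ℕ} (hq : 0 < q) (hN : 0 < N) (hNm : N ≤ m / q) :
    (m : ℝ) / ((m / q : ℕ) * q) ∈ Set.Icc 1 (1 + 1 / (N : ℝ)) := by
  set j := m / q
  have hj : (0 : ℝ) < j := by exact_mod_cast hN.trans_le hNm
  have hq' : (0 : ℝ) < q := by exact_mod_cast hq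
  have hlow : ((j * q : ℕ) : ℝ) ≤ m := by exact_mod_cast Nat.div_mul_le_self m q
  have hupp : (m : ℝ) ≤ ((j * q + q : ℕ) : ℝ) := by exact_mod_cast (Nat.lt_div_mul_add hq).le
  push_cast at hlow hupp
  refine ⟨by rwa [one_le_div (by positivity)], ?_⟩
  calc (m : ℝ) / (j * q) ≤ (j * q + q) / (j * q) := by gcongr
    _ = 1 + 1 / j := by field_simp
    _ ≤ 1 + 1 / N := by gcongr

def leadingDigits (b N a : ℕ) : ℕ := a * N / b ^ Nat.log b a

lemma leadingDigits_lt {b N : ℕ} (hb : 1 < b) (hN : 0 < N) (a : ℕ) :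
    leadingDigits b N a < b * N := by
  refine Nat.div_lt_of_lt_mul ?_
  calc a * N < b ^ (Nat.log b a + 1) * N :=
        Nat.mul_lt_mul_of_pos_right (Nat.lt_pow_succ_log_self hb a) hN
    _ = b ^ Nat.log b a * (b * N) := by ring

lemma le_leadingDigits {b : ℕ} (hb : 1 < b) (N : ℕ) {a : ℕ} (ha : a ≠ 0) :
    N ≤ leadingDigits b N a := by
  rw [leadingDigits.eq_1, Nat.le_div_iff_mul_le (by positivity), mul_comm]
  exact Nat.mul_le_mul_right N (Nat.pow_log_le_self b ha)

lemma exists_eq_mul_pow_mul_of_leadingDigits_eq {b N : ℕ} (hb : 1 < b) (hN : 0 < N)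
    {a : ι → ℕ} (ha : ∀ i, a i ≠ 0)
    (hmono : ∀ i i', leadingDigits b N (a i) = leadingDigits b N (a i')) :
    ∃ l : ℝ, 0 < l ∧ ∃ σ : ι → ℝ, (∀ i, σ i ∈ Set.Icc 1 (1 + 1 / (N : ℝ))) ∧
      ∀ i, (a i : ℝ) = l * b ^ Nat.log b (a i) * σ i := by
  rcases isEmpty_or_nonempty ι with hι | ⟨⟨i₀⟩⟩
  · exact ⟨1, one_pos, fun _ => 1, isEmptyElim, isEmptyElim⟩
  set j := leadingDigits b N (a i₀)
  have hj : (0 : ℝ) < j := by exact_mod_cast hN.trans_le (le_leadingDigits hb N (ha i₀))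
  have hb0 : (0 : ℝ) < b := by positivity
  refine ⟨j / N, by positivity, fun i => a i * N / (j * b ^ Nat.log b (a i)),
    fun i => ?_, fun i => by field_simp⟩
  have hmem := cast_div_natDiv_mul_mem_Icc (m := a i * N) (pow_pos (by omega) (Nat.log b (a i)))
    hN (le_leadingDigits hb N (ha i))
  rw [← leadingDigits, hmono i i₀] at hmem
  simpa using hmem

/-- Let `P` be a nonzero homogeneous polynomial (all multi-indexes in its
support have the same length `d`). If every nonempty subset of the support has
a nonzero sum of coefficients, then `P` is not partition regular on `ℕ`: some
finite coloring admits no monochromatic solution of `P = 0`. -/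
theorem not_pr_homogeneous {n : ℕ} (P : MvPolynomial (Fin n) ℤ) (hP : P ≠ 0)
    (d : ℕ) (hhom : ∀ α ∈ P.support, (∑ i, α i) = d)
    (h : ∀ Γ : Finset (Fin n →₀ ℕ), Γ ⊆ P.support → Γ.Nonempty →
      ∑ α ∈ Γ, P.coeff α ≠ 0) :
    ∃ (r : ℕ) (C : ℕ+ → Fin r), ∀ a : Fin n → ℕ+,
      (∀ i j, C (a i) = C (a j)) →
      MvPolynomial.eval (fun i => ((a i : ℕ) : ℤ)) P ≠ 0 := by
  have hsupp : P.support.Nonempty := MvPolynomial.support_nonempty.2 hP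
  set K := ∑ α ∈ P.support, (P.coeff α).natAbs
  have hK : 0 < K := by
    obtain ⟨α, hα⟩ := hsupp
    exact sum_pos' (fun _ _ => Nat.zero_le _)
      ⟨α, hα, Int.natAbs_pos.2 (MvPolynomial.mem_support_iff.1 hα)⟩
  set b := 2 * K + 2
  obtain ⟨N, hN, hNd⟩ := exists_one_add_inv_pow_le d (ε := 1 / (2 * K)) (by positivity)
  refine ⟨b * N, fun x => ⟨leadingDigits b N x, leadingDigits_lt (by omega) hN x⟩, fun a ha => ?_⟩
  obtain ⟨l, hl, σ, hσ, haσ⟩ := exists_eq_mul_pow_mul_of_leadingDigits_eq (by omega) hN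
    (a := fun i => (a i : ℕ)) (fun i => (a i).ne_zero) fun i i' => Fin.val_eq_of_eq (ha i i')
  have heval := intCast_eval_eq_pow_mul_sum P hhom (x := fun i => ((a i : ℕ) : ℤ))
    fun i => by push_cast; exact haσ i
  intro hzero
  rw [hzero, Int.cast_zero, eq_comm, mul_eq_zero] at heval
  refine sum_intCast_mul_pow_mul_ne_zero _ _ hsupp h _ (by omega) (fun α hα => ?_)
    (le_of_eq (by field_simp) : (K : ℝ) * (1 / (2 * K)) ≤ 1 / 2)
    (heval.resolve_left (pow_ne_zero d hl.ne'))
  rw [← hhom α hα] at hNd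
  exact Set.Icc_subset_Icc_right hNd (prod_pow_mem_Icc _ (fun i _ => hσ i) α)
end

section
/- Let P(x₁,…,xₙ) = P₁(x₁) + … + Pₙ(xₙ) where each P_i ∈ ℤ[x] is a one-variable polynomial with no constant term and not all P_i are zero (so every monomial of P contains a single variable). If P is non-trivially partition regular on ℕ (for every finite partition of ℕ there is a monochromatic solution a₁,…,aₙ of P = 0 with at least two distinct values among a₁,…,aₙ), then there exist a degree d ≥ 1 and a nonempty set J ⊆ {i : P_i ≠ 0} such that deg P_j = d for every j ∈ J and the sum of the leading coefficients of the P_j over j ∈ J equals 0. -/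
/-!
Colour `x` by its `s + 1` leading base-`b` digits and by `⌊2D log₂ K⌋ mod (4D² + 1)`, where
`K = ⌊log_b x⌋` and `D` bounds the degrees. In a monochromatic non-constant solution every `aᵢ`
has more than `s` digits, so `aᵢ = t bᵏⁱ (1 + O(1/b))` with one `t` for all `i`, and
`Pᵢ(aᵢ) = ℓᵢ Mᵢ (1 + O(1/b))` for `Mᵢ = (t bᵏⁱ)ᵈⁱ`. Two magnitudes `Mᵢ, Mⱼ` within a factor `b`
of each other have `dᵢ Kᵢ ≈ dⱼ Kⱼ`; for `dᵢ ≠ dⱼ` this forces `Kⱼ / Kᵢ ≈ dᵢ / dⱼ`, which the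
second colour forbids, and for `dᵢ = dⱼ` it forces `Mᵢ = Mⱼ`. So the indices of largest
magnitude `μ` share one degree, all other terms are `O(μ / b)`, and dividing `∑ Pᵢ(aᵢ) = 0` by
`μ` shows that their leading coefficients sum to an integer of absolute value `< 1`.
-/

open Polynomial Finset

lemma mul_abs_pow_sub_pow_le {R : Type*} [CommRing R] [LinearOrder R] [IsStrictOrderedRing R]
    {B x y : R} (hB : 0 ≤ B) (hy : 0 ≤ y) (hyx : y ≤ x) (hxy : B * (x - y) ≤ y) (d : ℕ) :
    B * |x ^ d - y ^ d| ≤ d * x ^ d := by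
  rcases Nat.eq_zero_or_pos d with rfl | hd
  · simp
  have hx : 0 ≤ x := hy.trans hyx
  calc B * |x ^ d - y ^ d| ≤ B * (|x - y| * d * max |x| |y| ^ (d - 1)) :=
        mul_le_mul_of_nonneg_left (abs_pow_sub_pow_le _ _ _) hB
    _ = B * (x - y) * d * x ^ (d - 1) := by
        rw [abs_of_nonneg (sub_nonneg.mpr hyx), abs_of_nonneg hy, abs_of_nonneg hx,
          max_eq_left hyx]
        ring
    _ ≤ x * d * x ^ (d - 1) := by
        have := pow_nonneg hx (d - 1)
        gcongr
        linarith
    _ = d * x ^ d := by rw [mul_comm x, mul_assoc, ← pow_succ', Nat.sub_add_cancel hd]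

namespace Polynomial

def sumAbsCoeff (Q : ℤ[X]) : ℕ := ∑ m ∈ range (Q.natDegree + 1), (Q.coeff m).natAbs

def evalBound (Q : ℤ[X]) : ℕ := (Q.natDegree + 1) * 2 ^ Q.natDegree * Q.sumAbsCoeff

lemma natAbs_leadingCoeff_le_sumAbsCoeff (Q : ℤ[X]) : Q.leadingCoeff.natAbs ≤ Q.sumAbsCoeff :=
  single_le_sum (f := fun m => (Q.coeff m).natAbs) (fun _ _ => Nat.zero_le _)
    (self_mem_range_succ _)

lemma abs_eval_le_sumAbsCoeff_mul_pow (Q : ℤ[X]) {x : ℤ} (hx : 1 ≤ x) :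
    |Q.eval x| ≤ Q.sumAbsCoeff * x ^ Q.natDegree := by
  rw [eval_eq_sum_range, sumAbsCoeff, Nat.cast_sum, sum_mul]
  refine (abs_sum_le_sum_abs _ _).trans (sum_le_sum fun m hm => ?_)
  rw [abs_mul, abs_pow, abs_of_nonneg (show 0 ≤ x by linarith), Int.natCast_natAbs]
  exact mul_le_mul_of_nonneg_left (pow_le_pow_right₀ hx (Nat.lt_succ_iff.mp (mem_range.mp hm)))
    (abs_nonneg _)

lemma mul_abs_eval_sub_leadingCoeff_mul_pow_le (Q : ℤ[X]) {x : ℤ} (hx : 1 ≤ x) :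
    x * |Q.eval x - Q.leadingCoeff * x ^ Q.natDegree| ≤ Q.sumAbsCoeff * x ^ Q.natDegree := by
  rw [eval_eq_sum_range, sum_range_succ, coeff_natDegree, add_sub_cancel_right, sumAbsCoeff,
    Nat.cast_sum, sum_range_succ, add_mul, sum_mul, ← abs_of_nonneg (show 0 ≤ x by linarith),
    ← abs_mul, mul_sum]
  refine (abs_sum_le_sum_abs _ _).trans (le_add_of_le_of_nonneg (sum_le_sum fun m hm => ?_)
    (by positivity))
  simp only [abs_mul, abs_pow, abs_of_nonneg (show 0 ≤ x by linarith), Int.natCast_natAbs]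
  rw [mul_left_comm, ← pow_succ']
  exact mul_le_mul_of_nonneg_left (pow_le_pow_right₀ hx (mem_range.mp hm)) (abs_nonneg _)

lemma mul_abs_eval_sub_leadingCoeff_mul_pow_le_evalBound (Q : ℤ[X]) {B x y : ℤ} (hB : 1 ≤ B)
    (hBy : B ≤ y) (hyx : y ≤ x) (hxy : B * (x - y) ≤ y) :
    B * |Q.eval x - Q.leadingCoeff * y ^ Q.natDegree| ≤ Q.evalBound * y ^ Q.natDegree := by
  set d := Q.natDegree
  set A : ℤ := (Q.sumAbsCoeff : ℤ)
  have hxd : x ^ d ≤ 2 ^ d * y ^ d := by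
    rw [← mul_pow]; exact pow_le_pow_left₀ (by linarith) (by nlinarith) d
  have hlc : |Q.leadingCoeff| ≤ A := by
    rw [← Int.natCast_natAbs]; exact Int.ofNat_le.mpr Q.natAbs_leadingCoeff_le_sumAbsCoeff
  have hlead : B * |Q.eval x - Q.leadingCoeff * x ^ d| ≤ A * x ^ d :=
    (mul_le_mul_of_nonneg_right (hBy.trans hyx) (abs_nonneg _)).trans
      (Q.mul_abs_eval_sub_leadingCoeff_mul_pow_le (by linarith))
  have hpow := mul_abs_pow_sub_pow_le (by linarith) (by linarith) hyx hxy d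
  have htri := abs_sub_le (Q.eval x) (Q.leadingCoeff * x ^ d) (Q.leadingCoeff * y ^ d)
  rw [← mul_sub, abs_mul] at htri
  calc B * |Q.eval x - Q.leadingCoeff * y ^ d|
      ≤ B * (|Q.eval x - Q.leadingCoeff * x ^ d| + |Q.leadingCoeff| * |x ^ d - y ^ d|) :=
        mul_le_mul_of_nonneg_left htri (by linarith)
    _ = B * |Q.eval x - Q.leadingCoeff * x ^ d| + |Q.leadingCoeff| * (B * |x ^ d - y ^ d|) := by
        ring
    _ ≤ A * x ^ d + A * (d * x ^ d) := by gcongr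
    _ = (d + 1) * A * x ^ d := by ring
    _ ≤ (d + 1) * A * (2 ^ d * y ^ d) := by gcongr
    _ = Q.evalBound * y ^ d := by simp only [evalBound, A, d]; push_cast; ring

lemma abs_eval_le_evalBound_mul_pow (Q : ℤ[X]) {x y : ℤ} (hy : 1 ≤ y) (hyx : y ≤ x)
    (hxy : x ≤ 2 * y) : |Q.eval x| ≤ Q.evalBound * y ^ Q.natDegree := by
  calc |Q.eval x| ≤ Q.sumAbsCoeff * x ^ Q.natDegree :=
        Q.abs_eval_le_sumAbsCoeff_mul_pow (hy.trans hyx)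
    _ ≤ Q.sumAbsCoeff * (2 ^ Q.natDegree * y ^ Q.natDegree) := by
        rw [← mul_pow]; gcongr; linarith
    _ ≤ Q.evalBound * y ^ Q.natDegree := by
        rw [evalBound]; push_cast
        nlinarith [show (0 : ℤ) ≤ Q.sumAbsCoeff * (2 ^ Q.natDegree * y ^ Q.natDegree) by positivity]

lemma one_le_natDegree_of_coeff_zero_eq_zero {Q : ℤ[X]} (hQ : Q ≠ 0) (h0 : Q.coeff 0 = 0) :
    1 ≤ Q.natDegree := by
  by_contra! h
  exact hQ (by rw [eq_C_of_natDegree_eq_zero (Nat.lt_one_iff.mp h), h0, C_0])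

end Polynomial

section Dominant

variable {ι : Type*} [DecidableEq ι]

lemma sum_eq_zero_of_dominant {I J : Finset ι} (hJI : J ⊆ I) {ev ℓ : ι → ℤ} {μ b c : ℤ}
    (hμ : 0 < μ) (hc : 0 ≤ c) (hcb : c * #I < b) (hsum : ∑ i ∈ I, ev i = 0)
    (hJ : ∀ j ∈ J, b * |ℓ j * μ - ev j| ≤ c * μ) (hJc : ∀ j ∈ I \ J, b * |ev j| ≤ c * μ) :
    ∑ j ∈ J, ℓ j = 0 := by
  have hb : 0 < b := by nlinarith [show (0 : ℤ) ≤ #I from Nat.cast_nonneg _]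
  have hsplit : (∑ j ∈ J, ℓ j) * μ = ∑ j ∈ J, (ℓ j * μ - ev j) - ∑ j ∈ I \ J, ev j := by
    rw [sum_sub_distrib, sum_mul, sub_sub, add_comm, sum_sdiff hJI, hsum, sub_zero]
  have hbound : b * (|∑ j ∈ J, ℓ j| * μ) ≤ c * #I * μ := by
    calc b * (|∑ j ∈ J, ℓ j| * μ) = |∑ j ∈ J, b * (ℓ j * μ - ev j) - ∑ j ∈ I \ J, b * ev j| := by
          rw [← mul_sum, ← mul_sum, ← mul_sub, ← hsplit, abs_mul, abs_mul, abs_of_pos hb,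
            abs_of_pos hμ]
      _ ≤ ∑ j ∈ J, |b * (ℓ j * μ - ev j)| + ∑ j ∈ I \ J, |b * ev j| :=
          (abs_sub _ _).trans (add_le_add (abs_sum_le_sum_abs _ _) (abs_sum_le_sum_abs _ _))
      _ ≤ ∑ j ∈ J, c * μ + ∑ j ∈ I \ J, c * μ := by
          gcongr with j hj j hj
          · rw [abs_mul, abs_of_pos hb]; exact hJ j hj
          · rw [abs_mul, abs_of_pos hb]; exact hJc j hj
      _ = c * #I * μ := by
          rw [sum_const, sum_const, ← add_smul, add_comm, card_sdiff_add_card_eq_card hJI,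
            nsmul_eq_mul]
          ring
  have hlt : c * #I * μ < b * μ := mul_lt_mul_of_pos_right hcb hμ
  refine Int.abs_lt_one_iff.mp (lt_of_not_ge fun h => ?_)
  have := mul_le_mul_of_nonneg_left (le_mul_of_one_le_left hμ.le h) hb.le
  linarith

lemma exists_sum_eq_zero_of_separated {I : Finset ι} (hI : I.Nonempty) {ev ℓ M : ι → ℤ}
    {deg : ι → ℕ} {b c : ℤ} (hb : 1 < b) (hc : 0 ≤ c) (hcb : c * #I < b)
    (hM : ∀ i ∈ I, 0 < M i) (hsum : ∑ i ∈ I, ev i = 0)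
    (happrox : ∀ i ∈ I, b * |ev i - ℓ i * M i| ≤ c * M i) (hbound : ∀ i ∈ I, |ev i| ≤ c * M i)
    (hsep : ∀ i ∈ I, ∀ j ∈ I, M i < b * M j → M j < b * M i → deg i = deg j ∧ M i = M j) :
    ∃ i ∈ I, ∃ J ⊆ I, J.Nonempty ∧ (∀ j ∈ J, deg j = deg i) ∧ ∑ j ∈ J, ℓ j = 0 := by
  obtain ⟨i, hi, hmax⟩ := exists_max_image I M hI
  have hlt_mul : ∀ j ∈ I, M j < b * M i := fun j hj =>
    (hmax j hj).trans_lt (lt_mul_of_one_lt_left (hM i hi) hb)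
  refine ⟨i, hi, I.filter (M · = M i), filter_subset _ _, ⟨i, mem_filter.mpr ⟨hi, rfl⟩⟩,
    fun j hj => ?_, sum_eq_zero_of_dominant (filter_subset _ _) (hM i hi) hc hcb hsum
      (fun j hj => ?_) (fun j hj => ?_)⟩
  · obtain ⟨hj, hMj⟩ := mem_filter.mp hj
    exact (hsep j hj i hi (hlt_mul j hj) (hMj ▸ hlt_mul i hi)).1
  · obtain ⟨hj, hMj⟩ := mem_filter.mp hj
    rw [← hMj, abs_sub_comm]
    exact happrox j hj
  · obtain ⟨hj, hMj⟩ := mem_sdiff.mp hj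
    have hfar : b * M j ≤ M i := by
      by_contra! h
      exact hMj (mem_filter.mpr ⟨hj, (hsep j hj i hi (hlt_mul j hj) h).2⟩)
    calc b * |ev j| ≤ b * (c * M j) := mul_le_mul_of_nonneg_left (hbound j hj) (by linarith)
      _ = c * (b * M j) := by ring
      _ ≤ c * M i := mul_le_mul_of_nonneg_left hfar hc

lemma exists_sum_leadingCoeff_eq_zero_of_separated {I : Finset ι} (hI : I.Nonempty)
    (Q : ι → ℤ[X]) {x y : ι → ℕ} {b c : ℕ} (hb : 1 < b) (hc : ∀ i ∈ I, (Q i).evalBound ≤ c)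
    (hcb : c * #I < b) (hy : ∀ i ∈ I, b ≤ y i) (hyx : ∀ i ∈ I, y i ≤ x i)
    (hxy : ∀ i ∈ I, b * (x i - y i) ≤ y i) (hsum : ∑ i ∈ I, (Q i).eval (x i : ℤ) = 0)
    (hsep : ∀ i ∈ I, ∀ j ∈ I, y i ^ (Q i).natDegree < b * y j ^ (Q j).natDegree →
      y j ^ (Q j).natDegree < b * y i ^ (Q i).natDegree →
      (Q i).natDegree = (Q j).natDegree ∧ y i ^ (Q i).natDegree = y j ^ (Q j).natDegree) :
    ∃ i ∈ I, ∃ J ⊆ I, J.Nonempty ∧ (∀ j ∈ J, (Q j).natDegree = (Q i).natDegree) ∧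
      ∑ j ∈ J, (Q j).leadingCoeff = 0 := by
  have hyxℤ : ∀ i ∈ I, (y i : ℤ) ≤ x i := fun i hi => by exact_mod_cast hyx i hi
  have hxyℤ : ∀ i ∈ I, (b : ℤ) * (x i - y i) ≤ y i := fun i hi => by
    have := hxy i hi; zify [hyx i hi] at this; exact this
  have hc_mul : ∀ i ∈ I, ((Q i).evalBound : ℤ) * (y i : ℤ) ^ (Q i).natDegree ≤
      c * (y i : ℤ) ^ (Q i).natDegree := fun i hi => by
    gcongr; exact_mod_cast hc i hi
  refine exists_sum_eq_zero_of_separated hI (ℓ := fun i => (Q i).leadingCoeff)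
    (M := fun i => (y i : ℤ) ^ (Q i).natDegree) (deg := fun i => (Q i).natDegree)
    (b := b) (c := c) (by exact_mod_cast hb) (Nat.cast_nonneg c) (by exact_mod_cast hcb)
    (fun i hi => pow_pos (by have := hy i hi; omega) _) hsum (fun i hi => ?_) (fun i hi => ?_)
    (fun i hi j hj h h' => by
      exact_mod_cast hsep i hi j hj (by exact_mod_cast h) (by exact_mod_cast h'))
  · exact ((Q i).mul_abs_eval_sub_leadingCoeff_mul_pow_le_evalBound (by omega)
      (by exact_mod_cast hy i hi) (hyxℤ i hi) (hxyℤ i hi)).trans (hc_mul i hi)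
  · refine ((Q i).abs_eval_le_evalBound_mul_pow (by have := hy i hi; omega) (hyxℤ i hi)
      ?_).trans (hc_mul i hi)
    nlinarith [hxyℤ i hi, hyxℤ i hi]

end Dominant

namespace Nat

/-- `x` itself when it has at most `s + 1` digits, as `log b x - s` then truncates to `0`. -/
def leadingDigits (b s x : ℕ) : ℕ := x / b ^ (log b x - s)

def leadingPart (b s x : ℕ) : ℕ := leadingDigits b s x * b ^ (log b x - s)

section LeadingDigits

variable {b s x : ℕ}

lemma leadingDigits_lt (hb : 1 < b) : leadingDigits b s x < b ^ (s + 1) := by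
  rw [leadingDigits, Nat.div_lt_iff_lt_mul (by positivity), ← pow_add]
  exact (lt_pow_succ_log_self hb x).trans_le (Nat.pow_le_pow_right (by omega) (by omega))

lemma leadingDigits_of_log_le (h : log b x ≤ s) : leadingDigits b s x = x := by
  rw [leadingDigits, Nat.sub_eq_zero_of_le h, pow_zero, Nat.div_one]

lemma pow_le_leadingDigits (hb : 1 < b) (hx : x ≠ 0) (h : s ≤ log b x) :
    b ^ s ≤ leadingDigits b s x := by
  rw [leadingDigits, Nat.le_div_iff_mul_le (by positivity), ← pow_add, Nat.add_sub_cancel' h]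
  exact pow_log_le_self b hx

lemma le_log_of_leadingDigits_eq (hb : 1 < b) {y : ℕ} (hy : y ≠ 0)
    (h : leadingDigits b s x = leadingDigits b s y) (hxy : x ≠ y) : s ≤ log b x := by
  by_contra! hxs
  have hx_lt : x < b ^ s := lt_pow_of_log_lt hb hxs
  rw [leadingDigits_of_log_le hxs.le] at h
  by_cases hys : s ≤ log b y
  · exact absurd (h ▸ pow_le_leadingDigits hb hy hys) (not_le.mpr hx_lt)
  · exact hxy (h.trans (leadingDigits_of_log_le (not_le.mp hys).le))

lemma leadingPart_le : leadingPart b s x ≤ x := Nat.div_mul_le_self _ _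

lemma lt_leadingPart_add (hb : 1 < b) : x < leadingPart b s x + b ^ (log b x - s) :=
  Nat.lt_div_mul_add (by positivity)

lemma pow_log_le_leadingPart (hb : 1 < b) (hx : x ≠ 0) (h : s ≤ log b x) :
    b ^ log b x ≤ leadingPart b s x := by
  rw [leadingPart, ← Nat.add_sub_cancel' h, pow_add, Nat.add_sub_cancel_left]
  exact Nat.mul_le_mul_right _ (pow_le_leadingDigits hb hx h)

lemma leadingPart_ne_zero (hb : 1 < b) (hx : x ≠ 0) (h : s ≤ log b x) :
    leadingPart b s x ≠ 0 :=
  ((pow_pos (by omega) _).trans_le (pow_log_le_leadingPart hb hx h)).ne'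

lemma le_leadingPart (hb : 1 < b) (hs : 1 ≤ s) (hx : x ≠ 0) (h : s ≤ log b x) :
    b ≤ leadingPart b s x :=
  (Nat.le_self_pow (by omega) b).trans
    ((Nat.pow_le_pow_right (by omega) h).trans (pow_log_le_leadingPart hb hx h))

lemma log_leadingPart (hb : 1 < b) (hx : x ≠ 0) (h : s ≤ log b x) :
    log b (leadingPart b s x) = log b x :=
  log_eq_of_pow_le_of_lt_pow (pow_log_le_leadingPart hb hx h)
    (leadingPart_le.trans_lt (lt_pow_succ_log_self hb x))

lemma mul_sub_leadingPart_le (hb : 1 < b) (hs : 1 ≤ s) (hx : x ≠ 0) (h : s ≤ log b x) :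
    b * (x - leadingPart b s x) ≤ leadingPart b s x := by
  have := lt_leadingPart_add (s := s) (x := x) hb
  calc b * (x - leadingPart b s x) ≤ b ^ s * b ^ (log b x - s) :=
        Nat.mul_le_mul (Nat.le_self_pow (by omega) b) (by omega)
    _ ≤ leadingPart b s x := by
        rw [← pow_add, Nat.add_sub_cancel' h]; exact pow_log_le_leadingPart hb hx h

lemma mul_leadingPart_le_of_log_lt (hb : 1 < b) {x' : ℕ}
    (hlead : leadingDigits b s x = leadingDigits b s x') (hs : s ≤ log b x)
    (hlt : log b x < log b x') : b * leadingPart b s x ≤ leadingPart b s x' := by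
  rw [leadingPart, leadingPart, hlead, mul_left_comm, ← pow_succ']
  exact Nat.mul_le_mul_left _ (Nat.pow_le_pow_right (by omega) (by omega))

end LeadingDigits

lemma log_mod_ne_of_mul_le_of_le_pow_mul {b k X Y : ℕ} (hb : 1 < b) (hX : X ≠ 0)
    (h₁ : b * X ≤ Y) (h₂ : Y ≤ b ^ k * X) : log b X % (k + 1) ≠ log b Y % (k + 1) := by
  have hlo : log b X + 1 ≤ log b Y := by
    rw [← log_mul_base hb hX, mul_comm]; exact log_mono_right h₁
  have hhi : log b Y < log b X + k + 1 := by
    refine log_lt_of_lt_pow (by nlinarith [Nat.pos_of_ne_zero hX]) (h₂.trans_lt ?_)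
    calc b ^ k * X < b ^ k * b ^ (log b X + 1) :=
          Nat.mul_lt_mul_of_pos_left (lt_pow_succ_log_self hb X) (by positivity)
      _ = b ^ (log b X + k + 1) := by ring
  intro h
  have := Nat.le_of_dvd (by omega) (Nat.dvd_of_mod_eq_zero (Nat.sub_mod_eq_zero_of_mod_eq h.symm))
  omega

lemma two_mul_pow_le_pow_of_succ_mul_le {e X Y : ℕ} (he : 1 ≤ e) (h : (e + 1) * X ≤ e * Y) :
    2 * X ^ e ≤ Y ^ e := by
  have hbernoulli : 2 * e ^ e ≤ (e + 1) ^ e := by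
    have := pow_add_mul_le_add_pow (a := e) (b := 1) (Nat.zero_le _) (Nat.zero_le _) e
    rwa [Nat.cast_id, mul_one, ← pow_succ', Nat.succ_eq_add_one, Nat.sub_add_cancel he,
      ← two_mul] at this
  refine Nat.le_of_mul_le_mul_left ?_ (pow_pos he e)
  calc e ^ e * (2 * X ^ e) = 2 * e ^ e * X ^ e := by ring
    _ ≤ (e + 1) ^ e * X ^ e := Nat.mul_le_mul_right _ hbernoulli
    _ = ((e + 1) * X) ^ e := (mul_pow _ _ _).symm
    _ ≤ (e * Y) ^ e := Nat.pow_le_pow_left h e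
    _ = e ^ e * Y ^ e := mul_pow _ _ _

/-- `⌊2D log₂ K⌋ mod (4D² + 1)`: a ratio `K' / K` between `1 + 1/(2D)` and `2D` shifts
`⌊2D log₂ K⌋` by at least `1` and at most `4D²`. -/
def logLogClass (D K : ℕ) : ℕ := log 2 (K ^ (2 * D)) % (2 * D * (2 * D) + 1)

lemma logLogClass_ne {D p q K K' : ℕ} (hq : 1 ≤ q) (hqp : q < p) (hpD : p ≤ D)
    (hK : 2 * D ≤ K) (h₁ : p * K ≤ q * K' + D) (h₂ : q * K' ≤ p * K + D) :
    logLogClass D K ≠ logLogClass D K' := by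
  have hK0 : K ≠ 0 := by omega
  have hKK' : K ≤ K' := by nlinarith
  have hratio : (2 * D + 1) * K ≤ 2 * D * K' := by nlinarith
  have hK'le : K' ≤ 2 ^ (2 * D) * K := by
    have := Nat.lt_two_pow_self (n := 2 * D)
    nlinarith
  refine log_mod_ne_of_mul_le_of_le_pow_mul one_lt_two (pow_ne_zero _ hK0)
    (two_mul_pow_le_pow_of_succ_mul_le (by omega) hratio) ?_
  rw [pow_mul 2 (2 * D), ← mul_pow]
  exact Nat.pow_le_pow_left hK'le _

def digitColoring (b s D x : ℕ) : ℕ × ℕ := (leadingDigits b s x, logLogClass D (log b x))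

lemma finite_range_digitColoring {b : ℕ} (hb : 1 < b) (s D : ℕ) :
    (Set.range (digitColoring b s D)).Finite :=
  ((Set.finite_Iio (b ^ (s + 1))).prod (Set.finite_Iio (2 * D * (2 * D) + 1))).subset <| by
    rintro _ ⟨x, rfl⟩
    exact ⟨leadingDigits_lt hb, Nat.mod_lt _ (Nat.succ_pos _)⟩

lemma le_log_of_digitColoring_eq {ι : Type*} {b s D : ℕ} (hb : 1 < b) {a : ι → ℕ}
    (ha : ∀ i, a i ≠ 0) (hcol : ∀ i j, digitColoring b s D (a i) = digitColoring b s D (a j))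
    (hne : ∃ i j, a i ≠ a j) (i : ι) : s ≤ log b (a i) := by
  obtain ⟨i₀, j₀, hij⟩ := hne
  obtain ⟨k, hk⟩ : ∃ k, a i ≠ a k := if h : a i = a i₀ then ⟨j₀, h ▸ hij⟩ else ⟨i₀, h⟩
  exact le_log_of_leadingDigits_eq hb (ha k) (congrArg Prod.fst (hcol i k)) hk

lemma mul_log_le_of_pow_lt_mul_pow {b y z d e : ℕ} (hb : 1 < b) (hy : y ≠ 0)
    (h : y ^ d < b * z ^ e) : d * log b y ≤ e * log b z + e := by
  have : b ^ (d * log b y) < b ^ (e * log b z + e + 1) :=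
    calc b ^ (d * log b y) = (b ^ log b y) ^ d := by rw [← pow_mul, mul_comm]
      _ ≤ y ^ d := Nat.pow_le_pow_left (pow_log_le_self b hy) d
      _ < b * z ^ e := h
      _ ≤ b * (b ^ (log b z + 1)) ^ e :=
          Nat.mul_le_mul_left _ (Nat.pow_le_pow_left (lt_pow_succ_log_self hb z).le e)
      _ = b ^ (e * log b z + e + 1) := by ring
  have := (Nat.pow_lt_pow_iff_right hb).mp this
  omega

lemma mul_pow_le_pow_of_mul_le {b y y' d : ℕ} (hd : 1 ≤ d) (h : b * y ≤ y') :
    b * y ^ d ≤ y' ^ d :=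
  calc b * y ^ d ≤ b ^ d * y ^ d := by
        rcases Nat.eq_zero_or_pos b with rfl | hb
        · simp
        · exact Nat.mul_le_mul_right _ (Nat.le_self_pow (by omega) b)
    _ = (b * y) ^ d := (mul_pow _ _ _).symm
    _ ≤ y' ^ d := Nat.pow_le_pow_left h d

lemma eq_of_pow_leadingPart_lt_mul {b s D d d' x x' : ℕ} (hb : 1 < b) (hsD : 2 * D ≤ s)
    (hx : x ≠ 0) (hx' : x' ≠ 0) (hs : s ≤ log b x) (hs' : s ≤ log b x')
    (hcol : digitColoring b s D x = digitColoring b s D x')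
    (hd : 1 ≤ d) (hd' : 1 ≤ d') (hdD : d ≤ D) (hd'D : d' ≤ D)
    (h : leadingPart b s x ^ d < b * leadingPart b s x' ^ d')
    (h' : leadingPart b s x' ^ d' < b * leadingPart b s x ^ d) :
    d = d' ∧ leadingPart b s x = leadingPart b s x' := by
  obtain ⟨hlead, hclass⟩ : leadingDigits b s x = leadingDigits b s x' ∧
      logLogClass D (log b x) = logLogClass D (log b x') := Prod.ext_iff.mp hcol
  have e₁ := mul_log_le_of_pow_lt_mul_pow hb (leadingPart_ne_zero hb hx hs) h
  have e₂ := mul_log_le_of_pow_lt_mul_pow hb (leadingPart_ne_zero hb hx' hs') h'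
  rw [log_leadingPart hb hx hs, log_leadingPart hb hx' hs'] at e₁ e₂
  obtain rfl : d = d' := by
    rcases lt_trichotomy d d' with hlt | heq | hgt
    · exact absurd hclass.symm
        (logLogClass_ne hd hlt hd'D (hsD.trans hs') (by linarith) (by linarith))
    · exact heq
    · exact absurd hclass
        (logLogClass_ne hd' hgt hdD (hsD.trans hs) (by linarith) (by linarith))
  refine ⟨rfl, ?_⟩
  rcases lt_trichotomy (log b x) (log b x') with hlt | heq | hgt
  · exact absurd h' (not_lt.mpr
      (mul_pow_le_pow_of_mul_le hd (mul_leadingPart_le_of_log_lt hb hlead hs hlt)))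
  · rw [leadingPart, leadingPart, hlead, heq]
  · exact absurd h (not_lt.mpr
      (mul_pow_le_pow_of_mul_le hd (mul_leadingPart_le_of_log_lt hb hlead.symm hs' hgt)))

end Nat

def IsNontriviallyPartitionRegular {n : ℕ} (P : Fin n → ℤ[X]) : Prop :=
  ∀ (r : ℕ) (C : ℕ+ → Fin r), ∃ a : Fin n → ℕ+, (∀ i j, C (a i) = C (a j)) ∧
    (∑ i, (P i).eval (((a i : ℕ) : ℤ))) = 0 ∧ ∃ i j, a i ≠ a j

lemma IsNontriviallyPartitionRegular.exists_of_finite_range {n : ℕ} {P : Fin n → ℤ[X]}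
    (hP : IsNontriviallyPartitionRegular P) {β : Type*} (C : ℕ+ → β)
    (hC : (Set.range C).Finite) :
    ∃ a : Fin n → ℕ+, (∀ i j, C (a i) = C (a j)) ∧
      (∑ i, (P i).eval (((a i : ℕ) : ℤ))) = 0 ∧ ∃ i j, a i ≠ a j := by
  have := hC.to_subtype
  obtain ⟨a, hmono, hsum, hne⟩ :=
    hP _ fun x => Finite.equivFin (Set.range C) (Set.rangeFactorization C x)
  refine ⟨a, fun i j => ?_, hsum, hne⟩
  simpa [Set.rangeFactorization] using (Finite.equivFin (Set.range C)).injective (hmono i j)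

lemma exists_sum_leadingCoeff_eq_zero_of_digitColoring_eq {ι : Type*} [DecidableEq ι]
    {I : Finset ι} (hI : I.Nonempty) (Q : ι → ℤ[X]) {a : ι → ℕ} {b s D c : ℕ} (hb : 1 < b)
    (hs : 2 * D + 1 ≤ s) (hdeg : ∀ i ∈ I, 1 ≤ (Q i).natDegree ∧ (Q i).natDegree ≤ D)
    (hc : ∀ i ∈ I, (Q i).evalBound ≤ c) (hcb : c * #I < b) (ha : ∀ i, a i ≠ 0)
    (hcol : ∀ i j, Nat.digitColoring b s D (a i) = Nat.digitColoring b s D (a j))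
    (hne : ∃ i j, a i ≠ a j) (hsum : ∑ i ∈ I, (Q i).eval (a i : ℤ) = 0) :
    ∃ i ∈ I, ∃ J ⊆ I, J.Nonempty ∧ (∀ j ∈ J, (Q j).natDegree = (Q i).natDegree) ∧
      ∑ j ∈ J, (Q j).leadingCoeff = 0 := by
  have hlarge := Nat.le_log_of_digitColoring_eq hb ha hcol hne
  refine exists_sum_leadingCoeff_eq_zero_of_separated hI Q hb hc hcb
    (fun i _ => Nat.le_leadingPart hb (by omega) (ha i) (hlarge i)) (fun i _ => Nat.leadingPart_le)
    (fun i _ => Nat.mul_sub_leadingPart_le hb (by omega) (ha i) (hlarge i)) hsum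
    (fun i hi j hj h h' => ?_)
  obtain ⟨hd, hy⟩ := Nat.eq_of_pow_leadingPart_lt_mul hb (by omega) (ha i) (ha j) (hlarge i)
    (hlarge j) (hcol i j) (hdeg i hi).1 (hdeg j hj).1 (hdeg i hi).2 (hdeg j hj).2 h h'
  exact ⟨hd, by rw [hd, hy]⟩

/-- Let `P(x₁,…,xₙ) = P₁(x₁) + … + Pₙ(xₙ)` where each `Pᵢ ∈ ℤ[x]` has no
constant term and not all `Pᵢ` are zero. If `P` is non-trivially partition
regular on `ℕ`, then there are a degree `d ≥ 1` and a nonempty set `J` of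
indices with `Pⱼ ≠ 0`, `deg Pⱼ = d` for all `j ∈ J`, and the sum over `J` of
the leading coefficients equal to `0`. -/
theorem single_variable_monomials_necessary {n : ℕ} (P : Fin n → Polynomial ℤ)
    (h0 : ∀ i, (P i).coeff 0 = 0) (hne : ∃ i, P i ≠ 0)
    (hPR : ∀ (r : ℕ) (C : ℕ+ → Fin r), ∃ a : Fin n → ℕ+,
      (∀ i j, C (a i) = C (a j)) ∧
      (∑ i, (P i).eval (((a i : ℕ) : ℤ))) = 0 ∧
      (∃ i j, a i ≠ a j)) :
    ∃ d : ℕ, 1 ≤ d ∧ ∃ J : Finset (Fin n), J.Nonempty ∧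
      (∀ j ∈ J, P j ≠ 0 ∧ (P j).natDegree = d) ∧
      ∑ j ∈ J, (P j).leadingCoeff = 0 := by
  classical
  set D := univ.sup fun i => (P i).natDegree
  set c := ∑ i, (P i).evalBound
  set b := c * n + 2
  have hb : 1 < b := by omega
  obtain ⟨a, hmono, hsum, i₀, j₀, hij⟩ := IsNontriviallyPartitionRegular.exists_of_finite_range
    hPR (Nat.digitColoring b (2 * D + 1) D ∘ PNat.val)
    ((Nat.finite_range_digitColoring hb _ D).subset (Set.range_comp_subset_range _ _))
  set I := univ.filter (P · ≠ 0)
  have hmemI : ∀ i, i ∈ I ↔ P i ≠ 0 := by simp [I]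
  have hdeg : ∀ i ∈ I, 1 ≤ (P i).natDegree := fun i hi =>
    one_le_natDegree_of_coeff_zero_eq_zero ((hmemI i).mp hi) (h0 i)
  obtain ⟨i, hi, J, hJI, hJ, hdegJ, hlc⟩ := exists_sum_leadingCoeff_eq_zero_of_digitColoring_eq
    (let ⟨i, hi⟩ := hne; ⟨i, (hmemI i).mpr hi⟩) P (a := fun i => a i) hb le_rfl
    (fun i hi => ⟨hdeg i hi, le_sup (f := fun i => (P i).natDegree) (mem_univ i)⟩)
    (fun i _ => single_le_sum (f := fun i => (P i).evalBound) (fun _ _ => Nat.zero_le _)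
      (mem_univ i))
    ((Nat.mul_le_mul_left c ((card_le_univ I).trans_eq (Fintype.card_fin n))).trans_lt
      (Nat.lt_add_of_pos_right two_pos))
    (fun i => (a i).ne_zero) hmono ⟨i₀, j₀, PNat.coe_injective.ne hij⟩
    (by rwa [sum_filter_of_ne (p := (P · ≠ 0)) fun i _ h hP => h (by simp [hP])])
  exact ⟨(P i).natDegree, hdeg i hi, J, hJ, fun j hj => ⟨(hmemI j).mp (hJI hj), hdegJ j hj⟩, hlc⟩
end

section
/- Let c₁,…,cₙ be nonzero integers and d₁,…,dₙ ≥ 1. If the Diophantine equation ∑_{i=1}^n c_i x_i^{d_i} = 0 is non-trivially partition regular on ℕ, then there exists a nonempty set J ⊆ {1,…,n} such that d_i = d_j for all i, j ∈ J and ∑_{j∈J} c_j = 0. -/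
/-!
Suppose no nonempty set of indices with a common exponent has coefficient sum zero, and colour
`q` by `min q A`, by `⌊log q / ε⌋ mod R` and by `⌊log (log q) / η⌋ mod S`. In a monochromatic
nontrivial solution every `aᵢ` is at least `A`. Among the sizes `eᵢ = dᵢ log aᵢ` of the terms, a
pigeonhole argument finds a top cluster `T` separated from the other terms by a gap larger than
its width. Since `log eᵢ = log dᵢ + log log aᵢ` and distinct exponents `≤ D` have logarithms at
least `log (1 + 1/D)` apart, the second colour forces a common exponent on `T`; then the first
colour forces the terms `aᵢ^{dᵢ}` of `T` to agree up to a factor `1 + 1/(2∑|cᵢ|)`. So the terms of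
`T` add up to at least half the largest term, because `∑_{T} cᵢ` is a nonzero integer, and the
terms beyond the gap are too small to cancel them.
-/

open Finset Real

theorem abs_sub_lt_of_intCast_floor_div_eq {N : ℕ} {η u v : ℝ} (hη : 0 < η)
    (h : ((⌊u / η⌋ : ℤ) : ZMod N) = ⌊v / η⌋) (hN : |u - v| / η + 1 ≤ N) : |u - v| < η := by
  have hscale : |u - v| / η = |u / η - v / η| := by rw [← sub_div, abs_div, abs_of_pos hη]
  have hfloor : ⌊u / η⌋ = ⌊v / η⌋ := by
    have hdvd : (N : ℤ) ∣ ⌊v / η⌋ - ⌊u / η⌋ := (ZMod.intCast_eq_intCast_iff_dvd_sub _ _ _).1 h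
    have hlt : |((⌊v / η⌋ - ⌊u / η⌋ : ℤ) : ℝ)| < N := by
      rw [abs_lt]
      constructor <;> push_cast <;>
        linarith [Int.floor_le (u / η), Int.lt_floor_add_one (u / η), Int.floor_le (v / η),
          Int.lt_floor_add_one (v / η), le_abs_self (u / η - v / η), neg_abs_le (u / η - v / η)]
    have := Int.eq_zero_of_abs_lt_dvd hdvd (by exact_mod_cast hlt)
    omega
  have := Int.abs_sub_lt_one_of_floor_eq_floor hfloor
  rwa [← hscale, div_lt_one hη] at this

theorem Real.abs_log_sub_log_le {m u v : ℝ} (hm : 0 < m) (hu : m ≤ u) (hv : m ≤ v) :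
    |log u - log v| ≤ |u - v| / m := by
  have key : ∀ p q : ℝ, m ≤ p → m ≤ q → log p - log q ≤ |p - q| / m := fun p q hp hq => by
    have hq0 : 0 < q := hm.trans_le hq
    have hp0 : 0 < p := hm.trans_le hp
    calc log p - log q = log (p / q) := (log_div hp0.ne' hq0.ne').symm
      _ ≤ p / q - 1 := log_le_sub_one_of_pos (by positivity)
      _ = (p - q) / q := by field_simp
      _ ≤ |p - q| / q := by gcongr; exact le_abs_self _
      _ ≤ |p - q| / m := by gcongr
  rw [abs_le]
  constructor
  · rw [abs_sub_comm]
    linarith [key v u hv hu]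
  · exact key u v hu hv

theorem log_one_add_one_div_le_abs_log_sub_log {p q D : ℕ} (hp : 0 < p) (hq : 0 < q) (hpD : p ≤ D)
    (hqD : q ≤ D) (hpq : p ≠ q) : log (1 + 1 / D) ≤ |log p - log q| := by
  wlog hlt : p < q generalizing p q
  · rw [abs_sub_comm]; exact this hq hp hqD hpD hpq.symm (by omega)
  have hpR : (0 : ℝ) < p := by exact_mod_cast hp
  have hDR : (0 : ℝ) < D := by exact_mod_cast hp.trans_le hpD
  have hratio : 1 + 1 / (D : ℝ) ≤ q / p := by
    have : (p : ℝ) + 1 ≤ q := by exact_mod_cast hlt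
    rw [le_div_iff₀ hpR, add_mul, one_mul]
    have : (1 / D : ℝ) * p ≤ 1 := by
      rw [div_mul_eq_mul_div, one_mul, div_le_one (by positivity)]; exact_mod_cast hpD
    linarith
  calc log (1 + 1 / D) ≤ log (q / p) := log_le_log (by positivity) hratio
    _ = log q - log p := log_div (by positivity) hpR.ne'
    _ ≤ |log p - log q| := by rw [abs_sub_comm]; exact le_abs_self _

theorem exists_lt_card_forall_lt_imp_lt {ι α : Type*} [Fintype ι] [Preorder α] (f : ι → α)
    {t : ℕ → α} (ht : Antitone t) (h₀ : ∃ i, t 0 < f i) :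
    ∃ m < Fintype.card ι, ∀ i, t (m + 1) < f i → t m < f i := by
  classical
  by_contra! h
  have hcard : ∀ m ≤ Fintype.card ι, m + 1 ≤ #(univ.filter fun i => t m < f i) := by
    intro m
    induction m with
    | zero => intro _; simpa [card_pos, Finset.Nonempty] using h₀
    | succ k ih =>
      intro hk
      obtain ⟨i, hi, hik⟩ := h k (by omega)
      have hsub : univ.filter (fun i => t k < f i) ⊂ univ.filter fun i => t (k + 1) < f i := by
        refine ssubset_iff_of_subset ?_ |>.2 ⟨i, by simpa using hi, by simpa using hik⟩
        intro j
        simp only [mem_filter, mem_univ, true_and]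
        exact (ht k.le_succ).trans_lt
      have := card_lt_card hsub
      have := ih (by omega)
      omega
  have := hcard _ le_rfl
  have := card_le_univ (univ.filter fun i => t (Fintype.card ι) < f i)
  omega

theorem le_of_forall_min_eq {ι : Type*} {a : ι → ℕ} {A : ℕ}
    (h : ∀ i j, min (a i) A = min (a j) A) {j k : ι} (hjk : a j ≠ a k) (i : ι) : A ≤ a i := by
  by_contra! hi
  have := h j i
  have := h k i
  omega

theorem eq_of_intCast_floor_log_div_eq {d₁ d₂ D S : ℕ} {x₁ x₂ X₀ β η : ℝ}
    (hd₁ : 1 ≤ d₁) (hd₂ : 1 ≤ d₂) (hd₁D : d₁ ≤ D) (hd₂D : d₂ ≤ D)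
    (hX₀ : 0 < X₀) (hx₁ : X₀ ≤ x₁) (hx₂ : X₀ ≤ x₂) (hη : 0 < η)
    (hηD : 2 * η ≤ log (1 + 1 / D)) (hβ : β ≤ η * X₀) (hS : (log D + η) / η + 1 ≤ S)
    (hcol : ((⌊log x₁ / η⌋ : ℤ) : ZMod S) = ⌊log x₂ / η⌋) (hclose : |d₁ * x₁ - d₂ * x₂| ≤ β) :
    d₁ = d₂ := by
  have hd₁R : (1 : ℝ) ≤ d₁ := by exact_mod_cast hd₁
  have hd₂R : (1 : ℝ) ≤ d₂ := by exact_mod_cast hd₂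
  have hlogd : |log d₁ - log d₂| ≤ log D := by
    have h₁ : log d₁ ≤ log D := log_le_log (by positivity) (by exact_mod_cast hd₁D)
    have h₂ : log d₂ ≤ log D := log_le_log (by positivity) (by exact_mod_cast hd₂D)
    rw [abs_le]
    constructor <;> linarith [log_nonneg hd₁R, log_nonneg hd₂R]
  have hloge : |(log d₁ + log x₁) - (log d₂ + log x₂)| ≤ η := by
    have he₁ : X₀ ≤ d₁ * x₁ := hx₁.trans (le_mul_of_one_le_left (by linarith) hd₁R)
    have he₂ : X₀ ≤ d₂ * x₂ := hx₂.trans (le_mul_of_one_le_left (by linarith) hd₂R)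
    rw [← log_mul (by positivity) (by linarith), ← log_mul (by positivity) (by linarith)]
    calc _ ≤ |d₁ * x₁ - d₂ * x₂| / X₀ := abs_log_sub_log_le hX₀ he₁ he₂
      _ ≤ η := by rw [div_le_iff₀ hX₀]; linarith
  have hlogx : |log x₁ - log x₂| < η := by
    refine abs_sub_lt_of_intCast_floor_div_eq hη hcol (le_trans ?_ hS)
    gcongr
    rw [abs_le] at hlogd hloge ⊢
    constructor <;> linarith
  by_contra hne
  have := log_one_add_one_div_le_abs_log_sub_log hd₁ hd₂ hd₁D hd₂D hne
  rw [abs_le] at hloge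
  rw [abs_lt] at hlogx
  rcases abs_cases (log (d₁ : ℝ) - log d₂) with ⟨h, -⟩ | ⟨h, -⟩ <;> linarith

theorem sum_mul_exp_ne_zero_of_cluster {ι : Type*} [Fintype ι] (c : ι → ℤ) (e : ι → ℝ)
    {T : Finset ι} {E b : ℝ} (hT : ∑ i ∈ T, c i ≠ 0)
    (hTe : ∀ i ∈ T, E - 1 / (2 * ∑ k, |(c k : ℝ)|) ≤ e i ∧ e i ≤ E)
    (hTc : ∀ i ∉ T, e i ≤ E - b) (hb : 2 * ∑ k, |(c k : ℝ)| ≤ b) :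
    ∑ i, (c i : ℝ) * exp (e i) ≠ 0 := by
  classical
  set C := ∑ k, |(c k : ℝ)|
  have hσ : 1 ≤ |∑ i ∈ T, (c i : ℝ)| := by exact_mod_cast Int.one_le_abs hT
  have hCT : ∑ i ∈ T, |(c i : ℝ)| ≤ C := sum_le_univ_sum_of_nonneg fun _ => abs_nonneg _
  have hC : 0 < C := by linarith [abs_sum_le_sum_abs (fun i => (c i : ℝ)) T]
  have hnear : |∑ i ∈ T, c i * exp (e i) - (∑ i ∈ T, (c i : ℝ)) * exp E| ≤ exp E / 2 := by
    rw [sum_mul, ← sum_sub_distrib]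
    calc _ ≤ ∑ i ∈ T, |(c i : ℝ)| * (exp E / (2 * C)) := by
          refine (abs_sum_le_sum_abs _ _).trans (sum_le_sum fun i hi => ?_)
          rw [← mul_sub, abs_mul]
          gcongr
          obtain ⟨hlow, hup⟩ := hTe i hi
          rw [abs_sub_comm, abs_of_nonneg (sub_nonneg.2 (exp_le_exp.2 hup))]
          have hsplit : exp (e i) = exp E * exp (e i - E) := by rw [← exp_add, add_sub_cancel]
          have hconv := add_one_le_exp (e i - E)
          have : exp E * (1 / (2 * C)) = exp E / (2 * C) := by ring
          nlinarith [exp_pos E]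
      _ = (∑ i ∈ T, |(c i : ℝ)|) * (exp E / (2 * C)) := (sum_mul _ _ _).symm
      _ ≤ C * (exp E / (2 * C)) := by gcongr
      _ = exp E / 2 := by field_simp
  have htail : |∑ i ∈ Tᶜ, c i * exp (e i)| < exp E / 2 := by
    have hexp : 2 * C < exp b := by linarith [add_one_le_exp b]
    calc _ ≤ ∑ i ∈ Tᶜ, |(c i : ℝ)| * exp (E - b) := by
          refine (abs_sum_le_sum_abs _ _).trans (sum_le_sum fun i hi => ?_)
          rw [abs_mul, abs_of_pos (exp_pos _)]
          gcongr
          exact hTc i (mem_compl.1 hi)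
      _ = (∑ i ∈ Tᶜ, |(c i : ℝ)|) * exp (E - b) := (sum_mul _ _ _).symm
      _ ≤ C * exp (E - b) := by gcongr; exact sum_le_univ_sum_of_nonneg fun _ => abs_nonneg _
      _ < exp E / 2 := by
          rw [exp_sub, mul_div_assoc', div_lt_div_iff₀ (exp_pos b) two_pos]
          nlinarith [exp_pos E]
  intro hsum
  rw [← sum_add_sum_compl T] at hsum
  have hP : |∑ i ∈ T, (c i : ℝ) * exp (e i)| = |∑ i ∈ Tᶜ, c i * exp (e i)| := by
    rw [eq_neg_of_add_eq_zero_left hsum, abs_neg]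
  have hσE : exp E ≤ |(∑ i ∈ T, (c i : ℝ)) * exp E| := by
    rw [abs_mul, abs_of_pos (exp_pos E)]
    nlinarith [exp_pos E]
  linarith [abs_sub_abs_le_abs_sub ((∑ i ∈ T, (c i : ℝ)) * exp E) (∑ i ∈ T, c i * exp (e i)),
    abs_sub_comm ((∑ i ∈ T, (c i : ℝ)) * exp E) (∑ i ∈ T, c i * exp (e i))]

theorem sum_mul_exp_ne_zero_of_intCast_floor_eq {ι : Type*} [Fintype ι]
    {c : ι → ℤ} {d : ι → ℕ}
    (hσ : ∀ J : Finset ι, J.Nonempty → (∀ i ∈ J, ∀ j ∈ J, d i = d j) → ∑ j ∈ J, c j ≠ 0)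
    (hd : ∀ i, 1 ≤ d i) {D R S : ℕ} {X₀ ε η : ℝ} (hC : 0 < ∑ k, |(c k : ℝ)|)
    (hdD : ∀ i, d i ≤ D) (hX₀ : 0 < X₀) (hη : 0 < η) (hηD : 2 * η ≤ log (1 + 1 / D))
    (hβ : 2 ^ Fintype.card ι * ∑ k, |(c k : ℝ)| ≤ η * X₀) (hε : 0 < ε)
    (hεD : D * ε ≤ 1 / (2 * ∑ k, |(c k : ℝ)|))
    (hR : 2 ^ Fintype.card ι * (∑ k, |(c k : ℝ)|) / ε + 1 ≤ R) (hS : (log D + η) / η + 1 ≤ S)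
    {x : ι → ℝ} (hx : ∀ i, X₀ ≤ x i) (hxR : ∀ i j, ((⌊x i / ε⌋ : ℤ) : ZMod R) = ⌊x j / ε⌋)
    (hxS : ∀ i j, ((⌊log (x i) / η⌋ : ℤ) : ZMod S) = ⌊log (x j) / η⌋) :
    ∑ i, (c i : ℝ) * exp (d i * x i) ≠ 0 := by
  classical
  set C := ∑ k, |(c k : ℝ)|
  set e : ι → ℝ := fun i => d i * x i
  obtain ⟨i₀, -, hi₀⟩ := exists_max_image univ e (nonempty_of_sum_ne_zero hC.ne')
  obtain ⟨m, hm, hgap⟩ := exists_lt_card_forall_lt_imp_lt e (t := fun m => e i₀ - 2 ^ m * C)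
    (fun k l hkl => show e i₀ - 2 ^ l * C ≤ e i₀ - 2 ^ k * C by gcongr; norm_num)
    ⟨i₀, by simpa using hC⟩
  set b := 2 ^ m * C
  set T := univ.filter fun i => e i₀ - b < e i
  have hb : C ≤ b := le_mul_of_one_le_left hC.le (one_le_pow₀ one_le_two)
  have hbβ : b ≤ 2 ^ Fintype.card ι * C :=
    mul_le_mul_of_nonneg_right (pow_le_pow_right₀ one_le_two hm.le) hC.le
  have hi₀T : i₀ ∈ T := by simp only [T, mem_filter, mem_univ, true_and]; linarith
  have hclose : ∀ i ∈ T, |e i - e i₀| ≤ 2 ^ Fintype.card ι * C := fun i hi => by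
    have := (mem_filter.1 hi).2
    rw [abs_le]
    constructor <;> linarith [hi₀ i (mem_univ i)]
  have hdT : ∀ i ∈ T, d i = d i₀ := fun i hi =>
    eq_of_intCast_floor_log_div_eq (hd i) (hd i₀) (hdD i) (hdD i₀) hX₀ (hx i) (hx i₀) hη hηD hβ hS
      (hxS i i₀) (hclose i hi)
  refine sum_mul_exp_ne_zero_of_cluster c e (E := e i₀) (b := 2 * b)
    (hσ T ⟨i₀, hi₀T⟩ fun i hi j hj => (hdT i hi).trans (hdT j hj).symm)
    (fun i hi => ⟨?_, hi₀ i (mem_univ i)⟩) (fun i hi => ?_) (by linarith)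
  · have hdR : (1 : ℝ) ≤ d i₀ := by exact_mod_cast hd i₀
    have he : e i - e i₀ = d i₀ * (x i - x i₀) := by simp only [e, hdT i hi]; ring
    have hx' : |x i - x i₀| < ε := by
      refine abs_sub_lt_of_intCast_floor_div_eq hε (hxR i i₀) (le_trans ?_ hR)
      gcongr
      refine le_trans ?_ (hclose i hi)
      rw [he, abs_mul, Nat.abs_cast]
      exact le_mul_of_one_le_left (abs_nonneg _) hdR
    have : (d i₀ : ℝ) * ε ≤ D * ε := by gcongr; exact_mod_cast hdD i₀
    have := (abs_lt.1 hx').1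
    nlinarith
  · have := mt (hgap i) (by simpa [T] using hi)
    simp only [not_lt, pow_succ] at this
    linarith

theorem exists_coloring_forall_eq_of_sum_eq_zero {ι : Type*} [Fintype ι] [Nonempty ι]
    {c : ι → ℤ} {d : ι → ℕ}
    (hσ : ∀ J : Finset ι, J.Nonempty → (∀ i ∈ J, ∀ j ∈ J, d i = d j) → ∑ j ∈ J, c j ≠ 0)
    (hd : ∀ i, 1 ≤ d i) :
    ∃ (r : ℕ) (χ : ℕ+ → Fin r), ∀ a : ι → ℕ+, (∀ i j, χ (a i) = χ (a j)) →
      ∑ i, c i * ((a i : ℕ) : ℤ) ^ d i = 0 → ∀ i j, a i = a j := by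
  classical
  obtain ⟨i₀⟩ := ‹Nonempty ι›
  set C := ∑ k, |(c k : ℝ)|
  set β := 2 ^ Fintype.card ι * C
  set D := univ.sup d
  have hC : 0 < C := by
    have : c i₀ ≠ 0 := by simpa using hσ {i₀} (singleton_nonempty _) (by simp)
    exact (abs_pos.2 (by exact_mod_cast this)).trans_le
      (single_le_sum (fun k _ => abs_nonneg ((c k : ℝ))) (mem_univ i₀))
  have hdD : ∀ i, d i ≤ D := fun i => le_sup (mem_univ i)
  have hD : (0 : ℝ) < D := by exact_mod_cast (hd i₀).trans (hdD i₀)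
  set η := log (1 + 1 / D) / 2
  have hη : 0 < η := by have := log_pos (lt_add_of_pos_right 1 (one_div_pos.2 hD)); positivity
  set ε := 1 / (2 * C) / D
  set X₀ := β / η + 1
  set R := ⌈β / ε⌉₊ + 1
  set S := ⌈(log D + η) / η⌉₊ + 1
  set A := ⌈exp X₀⌉₊
  have hR : β / ε + 1 ≤ R := by simp only [R]; push_cast; linarith [Nat.le_ceil (β / ε)]
  have hS : (log D + η) / η + 1 ≤ S := by
    simp only [S]; push_cast; linarith [Nat.le_ceil ((log D + η) / η)]
  let χ (q : ℕ+) : Fin (A + 1) × ZMod R × ZMod S :=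
    (⟨min q A, Nat.lt_succ_of_le (min_le_right _ _)⟩, ⌊log q / ε⌋, ⌊log (log q) / η⌋)
  refine ⟨_, Fintype.equivFin _ ∘ χ, fun a hχ hsum => ?_⟩
  replace hχ : ∀ i j, χ (a i) = χ (a j) := fun i j => (Fintype.equivFin _).injective (hχ i j)
  by_contra! ⟨j, k, hjk⟩
  have hx : ∀ i, X₀ ≤ log (a i : ℕ) := fun i => by
    have := le_of_forall_min_eq (a := fun i => (a i : ℕ))
      (fun i j => congrArg (fun p => (p.1 : ℕ)) (hχ i j)) (PNat.coe_injective.ne hjk) i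
    exact (le_log_iff_exp_le (by positivity)).2 ((Nat.le_ceil _).trans (by exact_mod_cast this))
  refine sum_mul_exp_ne_zero_of_intCast_floor_eq hσ hd hC hdD (by positivity) hη
    (by simp only [η]; linarith)
    (by rw [mul_add, mul_div_cancel₀ _ hη.ne']; linarith) (by positivity)
    (by rw [mul_div_cancel₀ _ hD.ne']) hR hS hx
    (fun i j => congrArg (fun p => p.2.1) (hχ i j))
    (fun i j => congrArg (fun p => p.2.2) (hχ i j)) ?_
  have := congrArg (Int.cast : ℤ → ℝ) hsum
  push_cast at this
  simpa [exp_nat_mul, exp_log] using this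

-- `ℕ+` is the paper's `ℕ`.
theorem powers_rado_condition_necessary_general {n : ℕ} (c : Fin n → ℤ)
    (d : Fin n → ℕ) (hd : ∀ i, 1 ≤ d i)
    (hPR : ∀ (r : ℕ) (C : ℕ+ → Fin r), ∃ a : Fin n → ℕ+,
      (∀ i j, C (a i) = C (a j)) ∧
      (∑ i, c i * ((a i : ℕ) : ℤ) ^ d i) = 0 ∧
      (∃ i j, a i ≠ a j)) :
    ∃ J : Finset (Fin n), J.Nonempty ∧
      (∀ i ∈ J, ∀ j ∈ J, d i = d j) ∧ ∑ j ∈ J, c j = 0 := by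
  by_contra! hσ
  obtain ⟨-, -, -, i₀, -, -⟩ := hPR 1 fun _ => 0
  have : Nonempty (Fin n) := ⟨i₀⟩
  obtain ⟨r, χ, hχ⟩ := exists_coloring_forall_eq_of_sum_eq_zero hσ hd
  obtain ⟨a, hmono, hsum, i, j, hij⟩ := hPR r χ
  exact hij (hχ a hmono hsum i j)

/-- If `c₁,…,cₙ` are nonzero integers, `d₁,…,dₙ ≥ 1`, and the equation
`∑ᵢ cᵢ xᵢ^{dᵢ} = 0` is non-trivially partition regular on `ℕ`, then there is a
nonempty `J ⊆ {1,…,n}` with all exponents `dⱼ` (for `j ∈ J`) equal and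
`∑_{j∈J} cⱼ = 0`. -/
theorem powers_rado_condition_necessary {n : ℕ} (c : Fin n → ℤ)
    (hc : ∀ i, c i ≠ 0) (d : Fin n → ℕ) (hd : ∀ i, 1 ≤ d i)
    (hPR : ∀ (r : ℕ) (C : ℕ+ → Fin r), ∃ a : Fin n → ℕ+,
      (∀ i j, C (a i) = C (a j)) ∧
      (∑ i, c i * ((a i : ℕ) : ℤ) ^ d i) = 0 ∧
      (∃ i j, a i ≠ a j)) :
    ∃ J : Finset (Fin n), J.Nonempty ∧
      (∀ i ∈ J, ∀ j ∈ J, d i = d j) ∧ ∑ j ∈ J, c j = 0 :=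
  powers_rado_condition_necessary_general c d hd hPR
end
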